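/- (Paraproduct high-frequency estimate.) Let s, s₁, s₂ ∈ ℝ with s + d/2 = s₁ + s₂, 1 ≤ r ≤ ∞, 0 < ζ < ∞, and suppose s₁ ≤ d/2. Then for all f ∈ B^{s₁}_{2,1}(𝕋_b^d) and g ∈ B^{s₂}_{2,r}(𝕋_b^d), the paraproduct satisfies ‖T_f g‖^{h;ζ}_{B^s_{2,r}} ≤ C ‖f‖_{B^{s₁}_{2,1}} ‖g‖^{h;ζ/4}_{B^{s₂}_{2,r}}, with C independent of f, g, ζ. -/

import Mathlib

open MeasureTheory Filter Set
open scoped ENNReal Topology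

noncomputable section

namespace LowMach

attribute [local instance 10] Classical.propDecidable

/-- Frequency lattice of the torus `𝕋_b^d` (indices of Fourier modes). -/
abbrev Lat (d : ℕ) := Fin d → ℤ
/-- A scalar periodic distribution, represented by its Fourier coefficients. -/
abbrev SF (d : ℕ) := Lat d → ℂ
/-- A vector-field periodic distribution, represented by its Fourier coefficients. -/
abbrev VF (d : ℕ) := Lat d → Fin d → ℂ
/-- A `(d+1)`-component field `(a, u)`. -/
abbrev PairF (d : ℕ) := SF d × VF d

variable {d : ℕ} {E : Type*}

/-- `|𝕋_b^d| = ∏ 2π b_h`. -/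
def vol (b : Fin d → ℝ) : ℝ := ∏ h, (2 * Real.pi * b h)

/-- the real frequency `k_i/b_i` attached to the lattice point `k`. -/
def freq (b : Fin d → ℝ) (k : Lat d) (i : Fin d) : ℝ := (k i : ℝ) / b i

/-- `|k|`, the euclidean norm of the frequency. -/
def freqNorm (b : Fin d → ℝ) (k : Lat d) : ℝ := Real.sqrt (∑ i, (freq b k i) ^ 2)

/-- generalized sign: `1` iff the first nonzero component of `k` is positive. -/
def sg (k : Lat d) : ℝ := if ∃ i, 0 < k i ∧ ∀ j, j < i → k j = 0 then 1 else -1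

/-- `ℓ^r` norm (`r ∈ [1,∞]`) of an `ℝ≥0∞`-valued family. -/
def lr {α : Type*} (r : ℝ≥0∞) (f : α → ℝ≥0∞) : ℝ≥0∞ :=
  if r = ∞ then ⨆ a, f a else (∑' a, f a ^ r.toReal) ^ (1 / r.toReal)

/-- The time interval `(0,T)` (`T ∈ (0,∞]`). -/
def timeSet (T : ℝ≥0∞) : Set ℝ := {t : ℝ | 0 < t ∧ ENNReal.ofReal t < T}
/-- The time interval `[0,T]` (`= [0,∞)` if `T = ∞`). -/
def ctimeSet (T : ℝ≥0∞) : Set ℝ := {t : ℝ | 0 ≤ t ∧ ENNReal.ofReal t ≤ T}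

/-- `L^q(0,T)` norm of an `ℝ≥0∞`-valued function of time. -/
def timeLq (q T : ℝ≥0∞) (F : ℝ → ℝ≥0∞) : ℝ≥0∞ :=
  if q = ∞ then essSup F (volume.restrict (timeSet T))
  else (∫⁻ t in timeSet T, F t ^ q.toReal) ^ (1 / q.toReal)

/-- exponential on `ℝ≥0∞`. -/
def eexp (x : ℝ≥0∞) : ℝ≥0∞ := if x = ∞ then ∞ else ENNReal.ofReal (Real.exp x.toReal)

/-- The hypotheses on the fixed Littlewood–Paley bump function `φ`. -/
def GoodBump (φ : ℝ → ℝ) : Prop :=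
  ContDiff ℝ (⊤ : ℕ∞) φ ∧ (∀ ξ, 0 ≤ φ ξ) ∧
  (∀ ξ, φ ξ ≠ 0 → 3/4 ≤ |ξ| ∧ |ξ| ≤ 8/3) ∧
  (∀ ξ : ℝ, ξ ≠ 0 → HasSum (fun j : ℤ => φ ((2:ℝ) ^ (-j) * ξ)) 1)

section ENorms
variable [NormedAddCommGroup E] [NormedSpace ℝ E]

/-- the weight `φ(2^{-j}|k|)` of the `j`-th dyadic block. -/
def blockW (φ : ℝ → ℝ) (b : Fin d → ℝ) (j : ℤ) (k : Lat d) : ℝ :=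
  φ ((2:ℝ) ^ (-j) * freqNorm b k)

/-- the dyadic block `Δ_j` acting on Fourier coefficients. -/
def blockOp (φ : ℝ → ℝ) (b : Fin d → ℝ) (j : ℤ) (c : Lat d → E) : Lat d → E :=
  fun k => blockW φ b j k • c k

/-- the multiplier of the low-frequency cut-off `S_j` at `k ≠ 0`. -/
def SW (φ : ℝ → ℝ) (b : Fin d → ℝ) (j : ℤ) (k : Lat d) : ℝ :=
  ∑' j' : ℤ, if j' < j then blockW φ b j' k else 0

/-- the low-frequency cut-off `S_j g = ĝ₀/√|𝕋| + ∑_{j'≤j-1} Δ_{j'} g`. -/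
def SOp (φ : ℝ → ℝ) (b : Fin d → ℝ) (j : ℤ) (c : Lat d → E) : Lat d → E :=
  fun k => (if k = 0 then (1:ℝ) else SW φ b j k) • c k

/-- `L²(𝕋_b^d)` norm, via Parseval. -/
def eL2 (c : Lat d → E) : ℝ≥0∞ := (∑' k, (‖c k‖₊ : ℝ≥0∞) ^ 2) ^ (1/2 : ℝ)

/-- `‖ℱg‖_{ℓ¹}`. -/
def l1F (c : Lat d → E) : ℝ≥0∞ := ∑' k, (‖c k‖₊ : ℝ≥0∞)

/-- the mean-zero (underlined) part of a periodic distribution. -/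
def ul (c : Lat d → E) : Lat d → E := fun k => if k = 0 then 0 else c k

/-- `2^{js}‖Δ_j g‖_{L²}`. -/
def bw (φ : ℝ → ℝ) (b : Fin d → ℝ) (s : ℝ) (c : Lat d → E) (j : ℤ) : ℝ≥0∞ :=
  (2:ℝ≥0∞) ^ ((j : ℝ) * s) * eL2 (blockOp φ b j c)

/-- The Besov norm `‖·‖_{B^s_{2,r}}`. -/
def besovN (φ : ℝ → ℝ) (b : Fin d → ℝ) (s : ℝ) (r : ℝ≥0∞) (c : Lat d → E) : ℝ≥0∞ :=
  lr r (fun o : Option ℤ => o.elim (‖c 0‖₊ : ℝ≥0∞) (bw φ b s c))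

/-- High-frequency truncated Besov norm `‖·‖^{h;η}_{B^s_{2,r}}` (blocks `2^j ≥ η`). -/
def besovH (φ : ℝ → ℝ) (b : Fin d → ℝ) (η s : ℝ) (r : ℝ≥0∞) (c : Lat d → E) : ℝ≥0∞ :=
  lr r (fun j : ℤ => if η ≤ (2:ℝ) ^ j then bw φ b s c j else 0)

/-- Medium-frequency truncated Besov norm `‖·‖^{m;ζ,η}_{B^s_{2,r}}` (blocks `ζ ≤ 2^j < η`). -/
def besovM (φ : ℝ → ℝ) (b : Fin d → ℝ) (ζ η s : ℝ) (r : ℝ≥0∞) (c : Lat d → E) : ℝ≥0∞ :=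
  lr r (fun j : ℤ => if ζ ≤ (2:ℝ) ^ j ∧ (2:ℝ) ^ j < η then bw φ b s c j else 0)

/-- Low-frequency truncated Besov norm `‖·‖^{l;ζ}_{B^s_{2,r}}` (blocks `2^j < ζ`, plus zero mode). -/
def besovL (φ : ℝ → ℝ) (b : Fin d → ℝ) (ζ s : ℝ) (r : ℝ≥0∞) (c : Lat d → E) : ℝ≥0∞ :=
  lr r (fun o : Option ℤ =>
    o.elim (‖c 0‖₊ : ℝ≥0∞) (fun j => if (2:ℝ) ^ j < ζ then bw φ b s c j else 0))

/-- The Sobolev norm `‖·‖_{H^s}`. -/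
def hsN (b : Fin d → ℝ) (s : ℝ) (c : Lat d → E) : ℝ≥0∞ :=
  ((‖c 0‖₊ : ℝ≥0∞) ^ 2 +
    ∑' k, (if k = 0 then 0
      else ENNReal.ofReal (freqNorm b k ^ (2*s)) * (‖c k‖₊ : ℝ≥0∞) ^ 2)) ^ (1/2 : ℝ)

/-- The Chemin–Lerner norm `‖·‖_{L̃^q_T(B^s_{2,r})}`. -/
def CL (φ : ℝ → ℝ) (b : Fin d → ℝ) (q T : ℝ≥0∞) (s : ℝ) (r : ℝ≥0∞)
    (F : ℝ → Lat d → E) : ℝ≥0∞ :=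
  lr r (fun o : Option ℤ => o.elim (timeLq q T (fun t => (‖F t 0‖₊ : ℝ≥0∞)))
    (fun j => (2:ℝ≥0∞) ^ ((j:ℝ) * s) * timeLq q T (fun t => eL2 (blockOp φ b j (F t)))))

/-- `‖·‖^{h;η}_{L̃^q_T(B^s_{2,r})}`. -/
def CLH (φ : ℝ → ℝ) (b : Fin d → ℝ) (η : ℝ) (q T : ℝ≥0∞) (s : ℝ) (r : ℝ≥0∞)
    (F : ℝ → Lat d → E) : ℝ≥0∞ :=
  lr r (fun j : ℤ => if η ≤ (2:ℝ) ^ j then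
    (2:ℝ≥0∞) ^ ((j:ℝ) * s) * timeLq q T (fun t => eL2 (blockOp φ b j (F t))) else 0)

/-- `‖·‖^{m;ζ,η}_{L̃^q_T(B^s_{2,r})}`. -/
def CLM (φ : ℝ → ℝ) (b : Fin d → ℝ) (ζ η : ℝ) (q T : ℝ≥0∞) (s : ℝ) (r : ℝ≥0∞)
    (F : ℝ → Lat d → E) : ℝ≥0∞ :=
  lr r (fun j : ℤ => if ζ ≤ (2:ℝ) ^ j ∧ (2:ℝ) ^ j < η then
    (2:ℝ≥0∞) ^ ((j:ℝ) * s) * timeLq q T (fun t => eL2 (blockOp φ b j (F t))) else 0)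

/-- `‖·‖^{l;ζ}_{L̃^q_T(B^s_{2,r})}`. -/
def CLL (φ : ℝ → ℝ) (b : Fin d → ℝ) (ζ : ℝ) (q T : ℝ≥0∞) (s : ℝ) (r : ℝ≥0∞)
    (F : ℝ → Lat d → E) : ℝ≥0∞ :=
  lr r (fun o : Option ℤ => o.elim (timeLq q T (fun t => (‖F t 0‖₊ : ℝ≥0∞)))
    (fun j => if (2:ℝ) ^ j < ζ then
      (2:ℝ≥0∞) ^ ((j:ℝ) * s) * timeLq q T (fun t => eL2 (blockOp φ b j (F t))) else 0))

/-- `‖·‖_{L^q_T(B^s_{2,r})}`. -/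
def LqB (φ : ℝ → ℝ) (b : Fin d → ℝ) (q T : ℝ≥0∞) (s : ℝ) (r : ℝ≥0∞)
    (F : ℝ → Lat d → E) : ℝ≥0∞ :=
  timeLq q T (fun t => besovN φ b s r (F t))

/-- `‖·‖^{h;η}_{L^q_T(B^s_{2,r})}`. -/
def LqBH (φ : ℝ → ℝ) (b : Fin d → ℝ) (η : ℝ) (q T : ℝ≥0∞) (s : ℝ) (r : ℝ≥0∞)
    (F : ℝ → Lat d → E) : ℝ≥0∞ :=
  timeLq q T (fun t => besovH φ b η s r (F t))

/-- `‖·‖^{m;ζ,η}_{L^q_T(B^s_{2,r})}`. -/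
def LqBM (φ : ℝ → ℝ) (b : Fin d → ℝ) (ζ η : ℝ) (q T : ℝ≥0∞) (s : ℝ) (r : ℝ≥0∞)
    (F : ℝ → Lat d → E) : ℝ≥0∞ :=
  timeLq q T (fun t => besovM φ b ζ η s r (F t))

/-- `‖·‖^{l;ζ}_{L^q_T(B^s_{2,r})}`. -/
def LqBL (φ : ℝ → ℝ) (b : Fin d → ℝ) (ζ : ℝ) (q T : ℝ≥0∞) (s : ℝ) (r : ℝ≥0∞)
    (F : ℝ → Lat d → E) : ℝ≥0∞ :=
  timeLq q T (fun t => besovL φ b ζ s r (F t))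

/-- `‖·‖_{L^q_T(H^s)}`. -/
def LqHs (b : Fin d → ℝ) (q T : ℝ≥0∞) (s : ℝ) (F : ℝ → Lat d → E) : ℝ≥0∞ :=
  timeLq q T (fun t => hsN b s (F t))

/-- continuity in time, on `[0,T]`, with respect to a seminorm `N`. -/
def ContB (T : ℝ≥0∞) (N : (Lat d → E) → ℝ≥0∞) (F : ℝ → Lat d → E) : Prop :=
  ∀ t₀ ∈ ctimeSet T,
    Tendsto (fun t => N (fun k => F t k - F t₀ k)) (nhdsWithin t₀ (ctimeSet T)) (nhds 0)

/-- Fourier truncation: keep frequencies `|k| ≤ M`. -/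
def cutL (b : Fin d → ℝ) (M : ℝ) (c : Lat d → E) : Lat d → E :=
  fun k => if freqNorm b k ≤ M then c k else 0

/-- Fourier truncation: keep frequencies `|k| > M`. -/
def cutH (b : Fin d → ℝ) (M : ℝ) (c : Lat d → E) : Lat d → E :=
  fun k => if freqNorm b k ≤ M then 0 else c k

end ENorms

/-! ### Differential and product operators on Fourier coefficients -/

/-- product of two scalar periodic distributions (convolution of coefficients). -/
def mulC (b : Fin d → ℝ) (f g : SF d) : SF d :=
  fun m => ((Real.sqrt (vol b) : ℂ))⁻¹ * ∑' k, f k * g (m - k)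

/-- `∂_i`. -/
def pd (b : Fin d → ℝ) (i : Fin d) (f : SF d) : SF d :=
  fun k => Complex.I * (freq b k i : ℂ) * f k

/-- `div`. -/
def divC (b : Fin d → ℝ) (u : VF d) : SF d :=
  fun k => ∑ i, Complex.I * (freq b k i : ℂ) * u k i

/-- `∇`. -/
def gradC (b : Fin d → ℝ) (f : SF d) : VF d :=
  fun k i => Complex.I * (freq b k i : ℂ) * f k

/-- `Δ` on scalars. -/
def lapS (b : Fin d → ℝ) (f : SF d) : SF d :=
  fun k => ((-(freqNorm b k ^ 2) : ℝ) : ℂ) * f k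

/-- `Δ` on vector fields. -/
def lapV (b : Fin d → ℝ) (u : VF d) : VF d :=
  fun k i => ((-(freqNorm b k ^ 2) : ℝ) : ℂ) * u k i

/-- `ℚ = -∇(-Δ)⁻¹ div`, the projection onto gradient fields. -/
def QC (b : Fin d → ℝ) (u : VF d) : VF d := fun k i =>
  if k = 0 then 0 else
    (freq b k i : ℂ) * (∑ j, (freq b k j : ℂ) * u k j) / ((freqNorm b k ^ 2 : ℝ) : ℂ)

/-- `ℙ = I - ℚ`, the Leray projection. -/
def PC (b : Fin d → ℝ) (u : VF d) : VF d := fun k i => u k i - QC b u k i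

/-- product of a scalar field and a vector field. -/
def smulV (b : Fin d → ℝ) (f : SF d) (u : VF d) : VF d :=
  fun k i => mulC b f (fun k' => u k' i) k

/-- scalar product `u · v` of two vector fields. -/
def dotC (b : Fin d → ℝ) (u v : VF d) : SF d :=
  fun k => ∑ i, mulC b (fun k' => u k' i) (fun k' => v k' i) k

/-- `u · ∇v`. -/
def dotGrad (b : Fin d → ℝ) (u v : VF d) : VF d :=
  fun k i => ∑ j, mulC b (fun k' => u k' j) (pd b j (fun k' => v k' i)) k

/-- the Lamé operator `𝒜u = μΔu + (μ+λ)∇div u`. -/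
def AOp (b : Fin d → ℝ) (μ lam : ℝ) (u : VF d) : VF d := fun k i =>
  (μ : ℂ) * ((-(freqNorm b k ^ 2) : ℝ) : ℂ) * u k i
  + ((μ + lam : ℝ) : ℂ) * Complex.I * (freq b k i : ℂ) * divC b u k

/-! ### Spatial realization -/

/-- the function realizing a periodic distribution. -/
def toFun (b : Fin d → ℝ) (c : SF d) (x : EuclideanSpace ℝ (Fin d)) : ℂ :=
  ((Real.sqrt (vol b) : ℂ))⁻¹ *
    ∑' k, c k * Complex.exp (Complex.I * ((∑ i, freq b k i * x i : ℝ) : ℂ))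

/-- `L^∞` norm of a scalar periodic distribution. -/
def linf (b : Fin d → ℝ) (c : SF d) : ℝ≥0∞ :=
  ⨆ x : EuclideanSpace ℝ (Fin d), (‖toFun b c x‖₊ : ℝ≥0∞)

/-- `L^∞` norm of a vector field. -/
def linfV (b : Fin d → ℝ) (u : VF d) : ℝ≥0∞ := ⨆ i : Fin d, linf b (fun k => u k i)

/-- `L^∞` norm of a matrix field. -/
def linfM (b : Fin d → ℝ) (m : Lat d → Fin d → Fin d → ℂ) : ℝ≥0∞ :=
  ⨆ i : Fin d, ⨆ i' : Fin d, linf b (fun k => m k i i')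

/-- the gradient `∇u` of a vector field, a matrix field. -/
def gradVF (b : Fin d → ℝ) (u : VF d) : Lat d → Fin d → Fin d → ℂ :=
  fun k i i' => Complex.I * (freq b k i : ℂ) * u k i'

/-- `L^∞((0,T) × 𝕋_b^d)` norm of a time dependent scalar field. -/
def linfST (b : Fin d → ℝ) (T : ℝ≥0∞) (a : ℝ → SF d) : ℝ≥0∞ :=
  ⨆ t ∈ timeSet T, linf b (a t)

/-- a fundamental domain of the torus. -/
def box (b : Fin d → ℝ) : Set (EuclideanSpace ℝ (Fin d)) :=
  {x | ∀ i, x i ∈ Set.Ico (0:ℝ) (2 * Real.pi * b i)}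

/-- Fourier coefficients of the composition `G ∘ f` for a real-valued `f`. -/
def compC (b : Fin d → ℝ) (G : ℝ → ℝ) (c : SF d) : SF d := fun k =>
  ((Real.sqrt (vol b) : ℂ))⁻¹ *
    ∫ x in box b, (G ((toFun b c x).re) : ℂ) *
      Complex.exp (-Complex.I * ((∑ i, freq b k i * x i : ℝ) : ℂ))

/-! ### `L^p`-based Besov norms (general `p`) -/

/-- `L^p(𝕋_b^d)` norm of the `j`-th dyadic block. -/
def blockLp (φ : ℝ → ℝ) (b : Fin d → ℝ) (p : ℝ≥0∞) (j : ℤ) (c : SF d) : ℝ≥0∞ :=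
  eLpNorm (toFun b (blockOp φ b j c)) p (volume.restrict (box b))

/-- `L^p(𝕋_b^d)` norm of the zero mode `ĝ₀/√|𝕋_b^d|`. -/
def zmLp (b : Fin d → ℝ) (p : ℝ≥0∞) (c : SF d) : ℝ≥0∞ :=
  eLpNorm (fun _ : EuclideanSpace ℝ (Fin d) => ((Real.sqrt (vol b) : ℂ))⁻¹ * c 0) p
    (volume.restrict (box b))

/-- the Besov norm `‖·‖_{B^s_{p,r}}`. -/
def besovP (φ : ℝ → ℝ) (b : Fin d → ℝ) (p : ℝ≥0∞) (s : ℝ) (r : ℝ≥0∞) (c : SF d) : ℝ≥0∞ :=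
  lr r (fun o : Option ℤ =>
    o.elim (zmLp b p c) (fun j => (2:ℝ≥0∞) ^ ((j:ℝ) * s) * blockLp φ b p j c))

/-- the Chemin–Lerner norm `‖·‖_{L̃^q_T(B^s_{p,r})}`. -/
def CLP (φ : ℝ → ℝ) (b : Fin d → ℝ) (p q T : ℝ≥0∞) (s : ℝ) (r : ℝ≥0∞)
    (F : ℝ → SF d) : ℝ≥0∞ :=
  lr r (fun o : Option ℤ => o.elim (timeLq q T (fun t => zmLp b p (F t)))
    (fun j => (2:ℝ≥0∞) ^ ((j:ℝ) * s) * timeLq q T (fun t => blockLp φ b p j (F t))))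

/-- `‖·‖_{L^q_T(B^s_{p,r})}`. -/
def LqBP (φ : ℝ → ℝ) (b : Fin d → ℝ) (p q T : ℝ≥0∞) (s : ℝ) (r : ℝ≥0∞)
    (F : ℝ → SF d) : ℝ≥0∞ :=
  timeLq q T (fun t => besovP φ b p s r (F t))

/-! ### Bony decomposition -/

/-- the paraproduct `T_f g = ∑_j S_{j-2} f Δ_j g`. -/
def paraC (φ : ℝ → ℝ) (b : Fin d → ℝ) (f g : SF d) : SF d :=
  fun m => ∑' j : ℤ, mulC b (SOp φ b (j - 2) f) (blockOp φ b j g) m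

/-- the Bony remainder `R(f,g) = ∑_{|j-j'|≤2} Δ_j f Δ_{j'} g`. -/
def remC (φ : ℝ → ℝ) (b : Fin d → ℝ) (f g : SF d) : SF d :=
  fun m => ∑' p : ℤ × ℤ,
    if |p.1 - p.2| ≤ 2 then mulC b (blockOp φ b p.1 f) (blockOp φ b p.2 g) m else 0

/-! ### The acoustic wave group and the filtered/resonant bilinear operators -/

/-- the acoustic group `𝓛(τ) = e^{-τL}`, `L(a,u) = (div u, ∇a)`, computed explicitly
on Fourier modes. -/
def Lgrp (b : Fin d → ℝ) (τ : ℝ) (A : PairF d) : PairF d :=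
  (fun k =>
    if k = 0 then A.1 k else
      ((Real.cos (freqNorm b k * τ) : ℝ) : ℂ) * A.1 k -
        Complex.I * ((Real.sin (freqNorm b k * τ) : ℝ) : ℂ) *
          ((∑ i, (freq b k i : ℂ) * A.2 k i) / ((freqNorm b k : ℝ) : ℂ)),
   fun k i =>
    if k = 0 then A.2 k i else
      A.2 k i +
        (((Real.cos (freqNorm b k * τ) - 1 : ℝ) : ℂ) *
            ((∑ j, (freq b k j : ℂ) * A.2 k j) / ((freqNorm b k : ℝ) : ℂ)) -
          Complex.I * ((Real.sin (freqNorm b k * τ) : ℝ) : ℂ) * A.1 k) *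
          ((freq b k i / freqNorm b k : ℝ) : ℂ))

/-- membership in `(Ker L)^⊥ = {(a,∇g) : a ∈ L² mean-zero, g ∈ H¹}`. -/
def memKerLp (b : Fin d → ℝ) (A : PairF d) : Prop :=
  A.1 0 = 0 ∧ eL2 A.1 < ⊤ ∧
  ∃ g : SF d, (∀ k i, A.2 k i = Complex.I * (freq b k i : ℂ) * g k) ∧ hsN b 1 g < ⊤

/-- coordinates of a pair in the eigenbasis `Φ_k^α` of `L`. -/
def eig (b : Fin d → ℝ) (A : PairF d) (α : ℝ) (k : Lat d) : ℂ :=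
  (A.1 k - ((α * sg k : ℝ) : ℂ) *
    (∑ i, ((freq b k i / freqNorm b k : ℝ) : ℂ) * A.2 k i)) / ((Real.sqrt 2 : ℝ) : ℂ)

/-- reconstruction of a pair from coordinates in the eigenbasis `Φ_k^α`. -/
def fromEig (b : Fin d → ℝ) (Ec : ℝ → Lat d → ℂ) : PairF d :=
  (fun k => (Ec 1 k + Ec (-1) k) / ((Real.sqrt 2 : ℝ) : ℂ),
   fun k i => -(((sg k * (freq b k i / freqNorm b k) : ℝ)) : ℂ) *
      (Ec 1 k - Ec (-1) k) / ((Real.sqrt 2 : ℝ) : ℂ))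

/-- the filtered operator `𝒬₁^ε(u,B)` (with `τ = t/ε`). -/
def Q1e (b : Fin d → ℝ) (τ : ℝ) (u : VF d) (B : PairF d) : PairF d :=
  Lgrp b (-τ)
    ((fun m => divC b (smulV b (Lgrp b τ B).1 u) m),
     (fun m i => QC b (fun k i' =>
        dotGrad b u (Lgrp b τ B).2 k i' + dotGrad b (Lgrp b τ B).2 u k i') m i))

/-- the modified filtered operator `𝒬̌₁^ε(u,B)`. -/
def Qc1e (b : Fin d → ℝ) (τ : ℝ) (u : VF d) (B : PairF d) : PairF d :=
  Lgrp b (-τ)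
    ((fun m => divC b (smulV b (Lgrp b τ B).1 u) m),
     (fun m i => QC b (fun k i' => ∑ j, Complex.I * (freq b k j : ℂ) *
        mulC b (fun k' => u k' j) (fun k' => (Lgrp b τ B).2 k' i') k) m i))

/-- `𝒬̃₁^ε := 𝒬₁^ε - 𝒬̌₁^ε`. -/
def Qt1e (b : Fin d → ℝ) (τ : ℝ) (u : VF d) (B : PairF d) : PairF d :=
  (fun k => (Q1e b τ u B).1 k - (Qc1e b τ u B).1 k,
   fun k i => (Q1e b τ u B).2 k i - (Qc1e b τ u B).2 k i)

/-- the filtered operator `𝒬₂^ε(A,B)` (with `τ = t/ε`). -/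
def Q2e (b : Fin d → ℝ) (κ τ : ℝ) (A B : PairF d) : PairF d :=
  Lgrp b (-τ)
    ((fun m => (1/2 : ℂ) * divC b (fun k i =>
        mulC b (Lgrp b τ A).1 (fun k' => (Lgrp b τ B).2 k' i) k
        + mulC b (fun k' => (Lgrp b τ A).2 k' i) (Lgrp b τ B).1 k) m),
     (fun m i => (1/2 : ℂ) * (gradC b (dotC b (Lgrp b τ A).2 (Lgrp b τ B).2) m i
        + (κ : ℂ) * gradC b (mulC b (Lgrp b τ A).1 (Lgrp b τ B).1) m i)))

/-- the resonant limit `𝒬₁(v,A)` of `𝒬₁^ε`. -/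
def Q1res (b : Fin d → ℝ) (v : VF d) (A : PairF d) : PairF d :=
  fromEig b (fun γ m =>
    if m = 0 then 0 else
      (Complex.I / ((Real.sqrt (vol b) : ℝ) : ℂ)) *
        ∑' k : Lat d, ∑ α : Bool,
          (if k ≠ 0 ∧
              (if α then (1:ℝ) else -1) * sg k * freqNorm b k = γ * sg m * freqNorm b m then
            eig b A (if α then (1:ℝ) else -1) k *
              (∑ i, (freq b k i : ℂ) * v (m - k) i) *
              (((∑ i, freq b k i * freq b m i) / (freqNorm b k * freqNorm b m) : ℝ) : ℂ)
          else 0))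

/-- the resonant limit `𝒬₂(A,B)` of `𝒬₂^ε`. -/
def Q2res (b : Fin d → ℝ) (κ : ℝ) (A B : PairF d) : PairF d :=
  fromEig b (fun γ m =>
    if m = 0 then 0 else
      (-Complex.I) * (((Real.sqrt (2 * vol b))⁻¹ : ℝ) : ℂ) * (((κ + 3) / 4 : ℝ) : ℂ) *
        ((γ * sg m * freqNorm b m : ℝ) : ℂ) *
        ∑' k : Lat d,
          (if k ≠ 0 ∧ m - k ≠ 0 ∧
              sg k * freqNorm b k + sg (m - k) * freqNorm b (m - k)
                = γ * sg m * freqNorm b m then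
            eig b A γ k * eig b B γ (m - k)
          else 0))

/-- pair of coefficient functions, seen as a single `(d+1)`-component field. -/
def pairC (A : PairF d) : Lat d → ℂ × (Fin d → ℂ) := fun k => (A.1 k, A.2 k)

/-- time-dependent version of `pairC`. -/
def pairT (V : ℝ → PairF d) : ℝ → Lat d → ℂ × (Fin d → ℂ) := fun t => pairC (V t)

/-- the difference of two time-dependent pairs, as a `(d+1)`-component field. -/
def pdiffT (A B : ℝ → PairF d) : ℝ → Lat d → ℂ × (Fin d → ℂ) :=
  fun t k => ((A t).1 k - (B t).1 k, fun i => (A t).2 k i - (B t).2 k i)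

/-! ### The systems -/

/-- `F = -div(aᵉ uᵉ)`, the right-hand side of the mass equation. -/
def Ffield (b : Fin d → ℝ) (a : ℝ → SF d) (u : ℝ → VF d) : ℝ → SF d :=
  fun t k => -(divC b (smulV b (a t) (u t)) k)

/-- `G = -κ a∇a - K̃(εa) a∇a - I(εa)𝒜u + f`, the nonlinear right-hand side of the
momentum equation. -/
def Gfield (b : Fin d → ℝ) (μ lam κ : ℝ) (Kt : ℝ → ℝ) (ε : ℝ) (f : ℝ → VF d)
    (a : ℝ → SF d) (u : ℝ → VF d) : ℝ → VF d :=
  fun t k i =>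
    -(κ : ℂ) * smulV b (a t) (gradC b (a t)) k i
    - smulV b (compC b (fun y => Kt (ε * y)) (a t)) (smulV b (a t) (gradC b (a t))) k i
    - smulV b (compC b (fun y => (ε * y) / (1 + ε * y)) (a t)) (AOp b μ lam (u t)) k i
    + f t k i

/-- the compressible system (CNS_ε), written on Fourier coefficients:
`∂ₜa + ε⁻¹ div u = -div(au)`,
`∂ₜu + u·∇u - 𝒜u + ε⁻¹∇a = -κa∇a - K̃(εa)a∇a - I(εa)𝒜u + f`. -/
def IsCNS (b : Fin d → ℝ) (μ lam κ : ℝ) (Kt : ℝ → ℝ) (ε : ℝ) (T : ℝ≥0∞)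
    (f : ℝ → VF d) (a₀ : SF d) (u₀ : VF d) (a : ℝ → SF d) (u : ℝ → VF d) : Prop :=
  a 0 = a₀ ∧ u 0 = u₀ ∧
  (∀ t ∈ timeSet T, ∀ k, HasDerivAt (fun s => a s k)
      (-((ε⁻¹ : ℝ) : ℂ) * divC b (u t) k + Ffield b a u t k) t) ∧
  (∀ t ∈ timeSet T, ∀ k, ∀ i, HasDerivAt (fun s => u s k i)
      (-(dotGrad b (u t) (u t) k i) + AOp b μ lam (u t) k i
        - ((ε⁻¹ : ℝ) : ℂ) * gradC b (a t) k i + Gfield b μ lam κ Kt ε f a u t k i) t)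

/-- the incompressible Navier–Stokes system (INS):
`∂ₜv - μΔv + v·∇v + ∇π = h`, `div v = 0`. -/
def IsINS (b : Fin d → ℝ) (μ : ℝ) (T : ℝ≥0∞) (h : ℝ → VF d) (v₀ : VF d)
    (v : ℝ → VF d) : Prop :=
  v 0 = v₀ ∧ (∀ t ∈ timeSet T, ∀ k, divC b (v t) k = 0) ∧
  ∃ pr : ℝ → SF d, ∀ t ∈ timeSet T, ∀ k, ∀ i,
    HasDerivAt (fun s => v s k i)
      ((μ : ℂ) * lapV b (v t) k i - dotGrad b (v t) (v t) k i
        - gradC b (pr t) k i + h t k i) t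

/-- the limit system (LS): `∂ₜV + 𝒬₁(v,V) + 𝒬₂(V,V) - (ν/2)ΔV = 0`. -/
def IsLS (b : Fin d → ℝ) (ν κ : ℝ) (T : ℝ≥0∞) (v : ℝ → VF d) (V₀ : PairF d)
    (V : ℝ → PairF d) : Prop :=
  V 0 = V₀ ∧
  (∀ t ∈ timeSet T, ∀ k, HasDerivAt (fun s => (V s).1 k)
      (-(Q1res b (v t) (V t)).1 k - (Q2res b κ (V t) (V t)).1 k
        + ((ν/2 : ℝ) : ℂ) * lapS b (V t).1 k) t) ∧
  (∀ t ∈ timeSet T, ∀ k, ∀ i, HasDerivAt (fun s => (V s).2 k i)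
      (-(Q1res b (v t) (V t)).2 k i - (Q2res b κ (V t) (V t)).2 k i
        + ((ν/2 : ℝ) : ℂ) * lapV b (V t).2 k i) t)

/-! ### Solution classes -/

/-- `(a,u) ∈ C̃_T(B̲^{d/2}_{2,1}) × (C̃_T(B^{d/2-1}_{2,1}) ∩ L¹_T(B̲^{d/2+1}_{2,1}))^d`. -/
def CNSClass (φ : ℝ → ℝ) (b : Fin d → ℝ) (T : ℝ≥0∞)
    (a : ℝ → SF d) (u : ℝ → VF d) : Prop :=
  (∀ t ∈ ctimeSet T, a t 0 = 0) ∧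
  ContB T (besovN φ b ((d:ℝ)/2) 1) a ∧ CL φ b ∞ T ((d:ℝ)/2) 1 a < ⊤ ∧
  ContB T (besovN φ b ((d:ℝ)/2 - 1) 1) u ∧ CL φ b ∞ T ((d:ℝ)/2 - 1) 1 u < ⊤ ∧
  LqB φ b 1 T ((d:ℝ)/2 + 1) 1 (fun t => ul (u t)) < ⊤

/-- `v ∈ (C̃_T(B^{d/2-1}_{2,1}) ∩ L¹_T(B̲^{d/2+1}_{2,1}))^d`. -/
def INSClass (φ : ℝ → ℝ) (b : Fin d → ℝ) (T : ℝ≥0∞) (v : ℝ → VF d) : Prop :=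
  ContB T (besovN φ b ((d:ℝ)/2 - 1) 1) v ∧ CL φ b ∞ T ((d:ℝ)/2 - 1) 1 v < ⊤ ∧
  LqB φ b 1 T ((d:ℝ)/2 + 1) 1 (fun t => ul (v t)) < ⊤

/-- `V ∈ (Ker L)^⊥ ∩ (C̃_T(B^{d/2-1}_{2,1}) ∩ L¹_T(B^{d/2+1}_{2,1}))^{d+1}`. -/
def LSClass (φ : ℝ → ℝ) (b : Fin d → ℝ) (T : ℝ≥0∞) (V : ℝ → PairF d) : Prop :=
  (∀ t ∈ ctimeSet T, memKerLp b (V t)) ∧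
  ContB T (besovN φ b ((d:ℝ)/2 - 1) 1) (pairT V) ∧
  CL φ b ∞ T ((d:ℝ)/2 - 1) 1 (pairT V) < ⊤ ∧
  LqB φ b 1 T ((d:ℝ)/2 + 1) 1 (pairT V) < ⊤

/-! ### The quantities of the energy framework -/

/-- `t ↦ ℚuᵉ(t)`. -/
def nQu (b : Fin d → ℝ) (u : ℝ → VF d) : ℝ → VF d := fun t => QC b (u t)

/-- `t ↦ ℙuᵉ(t)`. -/
def nPu (b : Fin d → ℝ) (u : ℝ → VF d) : ℝ → VF d := fun t => PC b (u t)

/-- `t ↦ (aᵉ(t), ℚuᵉ(t))` as a `(d+1)`-component field. -/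
def pairAQ (b : Fin d → ℝ) (a : ℝ → SF d) (u : ℝ → VF d) :
    ℝ → Lat d → ℂ × (Fin d → ℂ) :=
  fun t k => (a t k, QC b (u t) k)

/-- the filtered unknown `Vᵉ(t) = 𝓛(-t/ε)(aᵉ(t), ℚuᵉ(t))`. -/
def VepsT (b : Fin d → ℝ) (ε : ℝ) (a : ℝ → SF d) (u : ℝ → VF d) : ℝ → PairF d :=
  fun t => Lgrp b (-(t/ε)) (a t, QC b (u t))

/-- `t ↦ ℙuᵉ(t) - v(t)`. -/
def wdiffT (b : Fin d → ℝ) (u : ℝ → VF d) (v : ℝ → VF d) : ℝ → VF d :=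
  fun t k i => PC b (u t) k i - v t k i

/-- the quantity `X^ε(T)`. -/
def XeQ (φ : ℝ → ℝ) (b : Fin d → ℝ) (η₀ ε : ℝ) (T : ℝ≥0∞)
    (a : ℝ → SF d) (u : ℝ → VF d) : ℝ≥0∞ :=
  ENNReal.ofReal ε * CLH φ b (η₀/ε) ∞ T ((d:ℝ)/2) 1 a
  + (ENNReal.ofReal ε)⁻¹ * LqBH φ b (η₀/ε) 1 T ((d:ℝ)/2) 1 a
  + (CLL φ b (η₀/ε) ∞ T ((d:ℝ)/2 - 1) 1 a + LqBL φ b (η₀/ε) 1 T ((d:ℝ)/2 + 1) 1 a)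
  + (CL φ b ∞ T ((d:ℝ)/2 - 1) 1 (nQu b u) + LqB φ b 1 T ((d:ℝ)/2 + 1) 1 (nQu b u))

/-- the quantity `P^ε(T)` (and `P` if applied to `v`). -/
def PeQ (φ : ℝ → ℝ) (b : Fin d → ℝ) (T : ℝ≥0∞) (w : ℝ → VF d) : ℝ≥0∞ :=
  CL φ b ∞ T ((d:ℝ)/2 - 1) 1 w + LqB φ b 1 T ((d:ℝ)/2 + 1) 1 (fun t => ul (w t))

/-- the quantity `[aᵉ,uᵉ]^{ζ,ε}_{h,m}(T)`. -/
def BhmQ (φ : ℝ → ℝ) (b : Fin d → ℝ) (η₀ ζ ε : ℝ) (T : ℝ≥0∞)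
    (a : ℝ → SF d) (u : ℝ → VF d) : ℝ≥0∞ :=
  ENNReal.ofReal ε * CL φ b ∞ T ((d:ℝ)/2) 1 a
  + ENNReal.ofReal ε * CLH φ b (η₀/ε) ∞ T ((d:ℝ)/2) 1 a
  + (ENNReal.ofReal ε)⁻¹ * LqBH φ b (η₀/ε) 1 T ((d:ℝ)/2) 1 a
  + (CLH φ b (η₀/ε) ∞ T ((d:ℝ)/2 - 1) 1 (nQu b u)
      + LqBH φ b (η₀/ε) 1 T ((d:ℝ)/2 + 1) 1 (nQu b u))
  + (CLM φ b ζ (η₀/ε) ∞ T ((d:ℝ)/2 - 1) 1 (pairAQ b a u)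
      + LqBM φ b ζ (η₀/ε) 1 T ((d:ℝ)/2 + 1) 1 (pairAQ b a u))
  + (CLH φ b ζ ∞ T ((d:ℝ)/2 - 1) 1 (nPu b u) + LqBH φ b ζ 1 T ((d:ℝ)/2 + 1) 1 (nPu b u))

/-- the quantity `[W,u]^{ζ,ε}_l(T)`. -/
def BlQ (φ : ℝ → ℝ) (b : Fin d → ℝ) {E : Type*} [NormedAddCommGroup E] [NormedSpace ℝ E]
    (ζ : ℝ) (T : ℝ≥0∞) (W : ℝ → Lat d → E) (w : ℝ → VF d) : ℝ≥0∞ :=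
  (CLL φ b ζ ∞ T ((d:ℝ)/2 - 1) 1 W + CLL φ b ζ 2 T ((d:ℝ)/2) 1 W)
  + (CLL φ b ζ ∞ T ((d:ℝ)/2 - 1) 1 w + LqBL φ b ζ 1 T ((d:ℝ)/2 + 1) 1 (fun t => ul (w t)))

/-- the quantity `Y^{ζ,ε}(T)`. -/
def YQ (φ : ℝ → ℝ) (b : Fin d → ℝ) (η₀ ζ ε : ℝ) (T : ℝ≥0∞)
    (a : ℝ → SF d) (u : ℝ → VF d) : ℝ≥0∞ :=
  BhmQ φ b η₀ ζ ε T a u + BlQ φ b ζ T (pairAQ b a u) (nPu b u)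

/-- the quantity `D^{ζ,ε}(T)`. -/
def DQ (φ : ℝ → ℝ) (b : Fin d → ℝ) (η₀ ζ ε : ℝ) (T : ℝ≥0∞)
    (a : ℝ → SF d) (u : ℝ → VF d) (V : ℝ → PairF d) (v : ℝ → VF d) : ℝ≥0∞ :=
  BhmQ φ b η₀ ζ ε T a u + BlQ φ b ζ T (pdiffT (VepsT b ε a u) V) (wdiffT b u v)

/-- the quantity `Z^ε_θ(T) = ‖Vᵉ-V‖_{L̃^∞_T(H^{d/2-1-θ}) ∩ L²_T(H^{d/2-θ})}`. -/
def ZQ (φ : ℝ → ℝ) (b : Fin d → ℝ) (θ : ℝ) (T : ℝ≥0∞) (ε : ℝ)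
    (a : ℝ → SF d) (u : ℝ → VF d) (V : ℝ → PairF d) : ℝ≥0∞ :=
  CL φ b ∞ T ((d:ℝ)/2 - 1 - θ) 2 (pdiffT (VepsT b ε a u) V)
  + timeLq 2 T (fun t => hsN b ((d:ℝ)/2 - θ) (pdiffT (VepsT b ε a u) V t))

/-- the quantity `W^ε_θ(T) = ‖ℙuᵉ-v‖_{L̃^∞_T(B^{d/2-1-θ}_{2,1}) ∩ L¹_T(B̲^{d/2+1-θ}_{2,1})}`. -/
def WQ (φ : ℝ → ℝ) (b : Fin d → ℝ) (θ : ℝ) (T : ℝ≥0∞)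
    (u : ℝ → VF d) (v : ℝ → VF d) : ℝ≥0∞ :=
  CL φ b ∞ T ((d:ℝ)/2 - 1 - θ) 1 (wdiffT b u v)
  + LqB φ b 1 T ((d:ℝ)/2 + 1 - θ) 1 (fun t => ul (wdiffT b u v t))

/-- the quantity `X = ‖V‖_{L̃^∞_{T₀}(B^{d/2-1}_{2,1}) ∩ L¹_{T₀}(B^{d/2+1}_{2,1})}`. -/
def XQ (φ : ℝ → ℝ) (b : Fin d → ℝ) (T₀ : ℝ≥0∞) (V : ℝ → PairF d) : ℝ≥0∞ :=
  CL φ b ∞ T₀ ((d:ℝ)/2 - 1) 1 (pairT V) + LqB φ b 1 T₀ ((d:ℝ)/2 + 1) 1 (pairT V)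

/-- the quantity `X₀`. -/
def X0Q (φ : ℝ → ℝ) (b : Fin d → ℝ) (η₀ ε : ℝ) (a₀ : SF d) (u₀ : VF d) : ℝ≥0∞ :=
  besovL φ b (η₀/ε) ((d:ℝ)/2 - 1) 1 a₀
  + ENNReal.ofReal ε * besovH φ b (η₀/ε) ((d:ℝ)/2) 1 a₀
  + besovN φ b ((d:ℝ)/2 - 1) 1 (QC b u₀)

/-- the quantity `P₀`. -/
def P0Q (φ : ℝ → ℝ) (b : Fin d → ℝ) (u₀ : VF d) : ℝ≥0∞ :=
  besovN φ b ((d:ℝ)/2 - 1) 1 (PC b u₀)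

/-- the quantity `ℚ_f`, where `fQ'` is the time derivative of `ℚf`. -/
def QfQ (φ : ℝ → ℝ) (b : Fin d → ℝ) (T₀ : ℝ≥0∞) (S : ℝ) (f fQ' : ℝ → VF d) : ℝ≥0∞ :=
  LqB φ b 1 T₀ ((d:ℝ)/2 - 1) 1 (fun t => QC b (f t))
  + LqHs b ∞ T₀ (-S) (fun t => QC b (f t))
  + LqHs b 1 T₀ (-S) fQ'

/-- the quantity `ℚ_f(0) = ‖ℚf(0)‖_{H^{-S}}`. -/
def Qf0Q (b : Fin d → ℝ) (S : ℝ) (f : ℝ → VF d) : ℝ≥0∞ := hsN b (-S) (QC b (f 0))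

/-- the quantity `ℙ_f`. -/
def PfQ (φ : ℝ → ℝ) (b : Fin d → ℝ) (T₀ : ℝ≥0∞) (f : ℝ → VF d) : ℝ≥0∞ :=
  LqB φ b 1 T₀ ((d:ℝ)/2 - 1) 1 (fun t => PC b (f t))

/-! ### Auxiliary material for Statement 8 -/

section Stmt8Aux

open scoped NNReal

variable {α : Type*}

private lemma count_tsum8 [Countable α] (f : α → ℝ≥0∞) :
    ∫⁻ a, f a ∂(@Measure.count α ⊤) = ∑' a, f a := by
  letI : MeasurableSpace α := ⊤
  haveI : MeasurableSingletonClass α := ⟨fun _ => trivial⟩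
  exact lintegral_count f

private lemma tsum_mul_le_l2 [Countable α] (u v : α → ℝ≥0∞) :
    ∑' a, u a * v a ≤ (∑' a, u a ^ 2) ^ (1/2 : ℝ) * (∑' a, v a ^ 2) ^ (1/2 : ℝ) := by
  letI : MeasurableSpace α := ⊤
  have hconj : Real.HolderConjugate 2 2 := Real.HolderConjugate.two_two
  have h := ENNReal.lintegral_mul_le_Lp_mul_Lq (Measure.count (α := α)) hconj
    (f := u) (g := v) (Measurable.aemeasurable (by exact measurable_of_countable u))
    (Measurable.aemeasurable (by exact measurable_of_countable v))
  simp only [Pi.mul_apply] at h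
  calc ∑' a, u a * v a = ∫⁻ a, u a * v a ∂(@Measure.count α ⊤) := (count_tsum8 _).symm
    _ ≤ (∫⁻ a, u a ^ (2:ℝ) ∂(@Measure.count α ⊤)) ^ (1/2:ℝ)
        * (∫⁻ a, v a ^ (2:ℝ) ∂(@Measure.count α ⊤)) ^ (1/2:ℝ) := h
    _ = (∑' a, u a ^ 2) ^ (1/2 : ℝ) * (∑' a, v a ^ 2) ^ (1/2 : ℝ) := by
        simp_rw [count_tsum8, ENNReal.rpow_two]

private lemma lp_add_le8 [Countable α] {p : ℝ} (hp : 1 ≤ p) (f g : α → ℝ≥0∞) :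
    (∑' a, (f a + g a) ^ p) ^ (1/p) ≤ (∑' a, f a ^ p) ^ (1/p) + (∑' a, g a ^ p) ^ (1/p) := by
  letI : MeasurableSpace α := ⊤
  have h := ENNReal.lintegral_Lp_add_le (μ := Measure.count (α := α))
    (Measurable.aemeasurable (by exact measurable_of_countable f))
    (Measurable.aemeasurable (by exact measurable_of_countable g)) hp
  simpa only [count_tsum8, Pi.add_apply] using h

private lemma l2_sum_le8 [Countable α] {ι : Type*} (t : Finset ι) (F : ι → α → ℝ≥0∞) :
    (∑' a, (∑ i ∈ t, F i a) ^ 2) ^ (1/2 : ℝ) ≤ ∑ i ∈ t, (∑' a, F i a ^ 2) ^ (1/2 : ℝ) := by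
  classical
  induction t using Finset.induction with
  | empty => simp
  | insert _ _ hx ih =>
      rename_i x t'
      simp only [Finset.sum_insert hx]
      refine le_trans ?_ (add_le_add_right ih _)
      have h := lp_add_le8 (p := 2) one_le_two (fun a => F x a) (fun a => ∑ i ∈ t', F i a)
      simpa [ENNReal.rpow_two] using h

private lemma ennnorm_tsum_le8 [Countable α] (f : α → ℂ) :
    (‖∑' a, f a‖₊ : ℝ≥0∞) ≤ ∑' a, (‖f a‖₊ : ℝ≥0∞) := by
  by_cases h : Summable fun a => ‖f a‖₊
  · rw [← ENNReal.coe_tsum h]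
    exact_mod_cast nnnorm_tsum_le h
  · have : ∑' a, (‖f a‖₊ : ℝ≥0∞) = ⊤ := by
      by_contra hne
      exact h (ENNReal.tsum_coe_ne_top_iff_summable.mp hne)
    exact this ▸ le_top

private lemma lr_mono8 {r : ℝ≥0∞} {f g : α → ℝ≥0∞} (h : ∀ a, f a ≤ g a) : lr r f ≤ lr r g := by
  unfold lr
  split
  · exact iSup_mono h
  · refine ENNReal.rpow_le_rpow (ENNReal.tsum_le_tsum fun a => ?_) (by positivity)
    exact ENNReal.rpow_le_rpow (h a) ENNReal.toReal_nonneg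

private lemma lr_add_le8 [Countable α] {r : ℝ≥0∞} (hr : 1 ≤ r) (f g : α → ℝ≥0∞) :
    lr r (fun a => f a + g a) ≤ lr r f + lr r g := by
  unfold lr
  split
  · exact iSup_le fun a => add_le_add (le_iSup f a) (le_iSup g a)
  · rename_i hne
    have hp : 1 ≤ r.toReal := by
      have := ENNReal.toReal_mono hne hr
      simpa using this
    exact lp_add_le8 hp f g

private lemma lr_sum_le8 [Countable α] {r : ℝ≥0∞} (hr : 1 ≤ r) {ι : Type*} (t : Finset ι)
    (F : ι → α → ℝ≥0∞) :
    lr r (fun a => ∑ i ∈ t, F i a) ≤ ∑ i ∈ t, lr r (F i) := by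
  classical
  induction t using Finset.induction with
  | empty =>
      simp only [Finset.sum_empty]
      unfold lr; split
      · simp
      · rename_i hne
        have hp : 0 < r.toReal := by
          have := ENNReal.toReal_mono hne hr
          simp at this; linarith
        simp [ENNReal.zero_rpow_of_pos hp,
          ENNReal.zero_rpow_of_pos (by positivity : (0:ℝ) < 1/r.toReal), hp]
  | insert _ _ hx ih =>
      rename_i x t'
      simp only [Finset.sum_insert hx]
      exact le_trans (lr_add_le8 hr _ _) (add_le_add_right ih _)

private lemma lr_const_mul8 {r : ℝ≥0∞} (hr : 1 ≤ r) (c : ℝ≥0∞) (f : α → ℝ≥0∞) :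
    lr r (fun a => c * f a) = c * lr r f := by
  unfold lr
  split
  · exact (ENNReal.mul_iSup (a := c) (f := f)).symm
  · rename_i hne
    have hp : 1 ≤ r.toReal := by
      have := ENNReal.toReal_mono hne hr
      simpa using this
    have hp0 : r.toReal ≠ 0 := by linarith
    have h1 : ∀ a, (c * f a) ^ r.toReal = c ^ r.toReal * f a ^ r.toReal := fun a =>
      ENNReal.mul_rpow_of_nonneg _ _ (by linarith)
    simp_rw [h1, ENNReal.tsum_mul_left]
    rw [ENNReal.mul_rpow_of_nonneg _ _ (by positivity : (0:ℝ) ≤ 1/r.toReal), ← ENNReal.rpow_mul,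
      mul_one_div_cancel hp0, ENNReal.rpow_one]

private lemma lr_shift8 {r : ℝ≥0∞} (f : ℤ → ℝ≥0∞) (i : ℤ) :
    lr r (fun a : ℤ => f (a + i)) = lr r f := by
  unfold lr
  split
  · exact (Equiv.addRight i).surjective.iSup_comp (g := f)
  · congr 1
    exact (Equiv.addRight i).tsum_eq (fun a => f a ^ r.toReal)

private lemma lr_one8 (f : α → ℝ≥0∞) : lr 1 f = ∑' a, f a := by
  unfold lr
  rw [if_neg (by simp)]
  simp

end Stmt8Aux
section Stmt8Dom

variable {d : ℕ} {b : Fin d → ℝ} {φ : ℝ → ℝ}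

/-- a positive lower bound for nonzero frequencies. -/
private def m0 (b : Fin d → ℝ) : ℝ := (∑ i, b i)⁻¹

private lemma m0_pos (hd : 0 < d) (hb : ∀ i, 0 < b i) : 0 < m0 b := by
  haveI : Nonempty (Fin d) := Fin.pos_iff_nonempty.mp hd
  exact inv_pos.mpr (Finset.sum_pos (fun i _ => hb i) Finset.univ_nonempty)

private lemma fn_nonneg (b : Fin d → ℝ) (k : Lat d) : 0 ≤ freqNorm b k := Real.sqrt_nonneg _

private def ev (b : Fin d → ℝ) (k : Lat d) : EuclideanSpace ℝ (Fin d) := WithLp.toLp 2 (fun i => freq b k i)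

private lemma fn_eq_norm (b : Fin d → ℝ) (k : Lat d) : freqNorm b k = ‖ev b k‖ := by
  rw [EuclideanSpace.norm_eq]
  unfold freqNorm
  congr 1
  refine Finset.sum_congr rfl fun i _ => ?_
  rw [Real.norm_eq_abs, sq_abs]
  rfl

private lemma ev_add (b : Fin d → ℝ) (k k' : Lat d) : ev b (k + k') = ev b k + ev b k' := by
  ext i
  show freq b (k + k') i = freq b k i + freq b k' i
  unfold freq
  rw [Pi.add_apply, Int.cast_add, add_div]

private lemma fn_zero (b : Fin d → ℝ) : freqNorm b 0 = 0 := by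
  unfold freqNorm freq
  simp

private lemma fn_add_le (b : Fin d → ℝ) (k k' : Lat d) :
    freqNorm b (k + k') ≤ freqNorm b k + freqNorm b k' := by
  rw [fn_eq_norm, fn_eq_norm, fn_eq_norm, ev_add]
  exact norm_add_le _ _

private lemma fn_neg (b : Fin d → ℝ) (k : Lat d) : freqNorm b (-k) = freqNorm b k := by
  unfold freqNorm freq
  congr 1
  refine Finset.sum_congr rfl fun i _ => ?_
  rw [Pi.neg_apply, Int.cast_neg, neg_div, neg_sq]

private lemma fn_sub_le (b : Fin d → ℝ) (k k' : Lat d) :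
    freqNorm b (k - k') ≤ freqNorm b k + freqNorm b k' := by
  rw [sub_eq_add_neg]
  exact (fn_add_le b k (-k')).trans (by rw [fn_neg])

private lemma abs_freq_le (b : Fin d → ℝ) (k : Lat d) (i : Fin d) :
    |freq b k i| ≤ freqNorm b k := by
  rw [← Real.sqrt_sq_eq_abs]
  apply Real.sqrt_le_sqrt
  exact Finset.single_le_sum (f := fun i => freq b k i ^ 2) (fun i _ => sq_nonneg _)
    (Finset.mem_univ i)

private lemma m0_le_fn (hb : ∀ i, 0 < b i) {k : Lat d} (hk : k ≠ 0) :
    m0 b ≤ freqNorm b k := by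
  obtain ⟨i, hi⟩ := Function.ne_iff.mp hk
  have h1 : (1:ℝ) ≤ |(k i : ℝ)| := by
    rw [← Int.cast_abs]
    exact_mod_cast Int.one_le_abs (by simpa using hi)
  have hble : b i ≤ ∑ j, b j := Finset.single_le_sum (fun j _ => (hb j).le) (Finset.mem_univ i)
  have hm : m0 b ≤ 1 / b i := by
    rw [show m0 b = 1 / ∑ j, b j from (one_div _).symm]
    exact one_div_le_one_div_of_le (hb i) hble
  refine hm.trans (le_trans ?_ (abs_freq_le b k i))
  unfold freq
  rw [abs_div, abs_of_pos (hb i)]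
  exact (div_le_div_iff_of_pos_right (hb i)).mpr h1

private lemma fn_pos (hd : 0 < d) (hb : ∀ i, 0 < b i) {k : Lat d} (hk : k ≠ 0) :
    0 < freqNorm b k :=
  lt_of_lt_of_le (m0_pos hd hb) (m0_le_fn hb hk)

/- φ facts -/

private lemma phi_zero (hφ : GoodBump φ) : φ 0 = 0 := by
  by_contra hne
  have := (hφ.2.2.1 0 hne).1
  rw [abs_zero] at this
  linarith

private lemma phi_nonneg (hφ : GoodBump φ) (x : ℝ) : 0 ≤ φ x := hφ.2.1 x

private lemma phi_le_one (hφ : GoodBump φ) {x : ℝ} (hx : 0 ≤ x) : φ x ≤ 1 := by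
  rcases eq_or_lt_of_le hx with h | h
  · rw [← h, phi_zero hφ]; norm_num
  · have hs := hφ.2.2.2 x h.ne'
    have := le_hasSum hs 0 (fun j _ => hφ.2.1 _)
    simpa using this

private lemma blockW_nonneg (hφ : GoodBump φ) (j : ℤ) (k : Lat d) :
    0 ≤ blockW φ b j k := hφ.2.1 _

private lemma blockW_le_one (hφ : GoodBump φ) (j : ℤ) (k : Lat d) :
    blockW φ b j k ≤ 1 :=
  phi_le_one hφ (mul_nonneg (zpow_pos two_pos _).le (fn_nonneg b k))

private lemma blockW_bounds (hφ : GoodBump φ) {j : ℤ} {k : Lat d}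
    (h : blockW φ b j k ≠ 0) :
    3/4 * (2:ℝ)^j ≤ freqNorm b k ∧ freqNorm b k ≤ 8/3 * (2:ℝ)^j := by
  obtain ⟨h1, h2⟩ := hφ.2.2.1 _ h
  have ht : (0:ℝ) < (2:ℝ)^j := zpow_pos two_pos _
  have habs : |(2:ℝ)^(-j) * freqNorm b k| = freqNorm b k / (2:ℝ)^j := by
    rw [abs_of_nonneg (mul_nonneg (zpow_pos two_pos _).le (fn_nonneg b k)),
      zpow_neg, inv_mul_eq_div]
  rw [habs] at h1 h2
  constructor
  · have := (le_div_iff₀ ht).mp h1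
    linarith
  · have := (div_le_iff₀ ht).mp h2
    linarith

private lemma blockW_small (hd : 0 < d) (hb : ∀ i, 0 < b i) (hφ : GoodBump φ)
    {j : ℤ} {k : Lat d} (h : blockW φ b j k ≠ 0) :
    3/8 * m0 b ≤ (2:ℝ)^j := by
  rcases eq_or_ne k 0 with rfl | hk
  · exfalso
    apply h
    unfold blockW
    rw [fn_zero, mul_zero, phi_zero hφ]
  · have h1 := m0_le_fn hb hk
    have h2 := (blockW_bounds hφ h).2
    linarith

/- SW and SOp facts -/

private lemma sw_hasSum (hd : 0 < d) (hb : ∀ i, 0 < b i) (hφ : GoodBump φ)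
    {k : Lat d} (hk : k ≠ 0) :
    HasSum (fun j' : ℤ => blockW φ b j' k) 1 :=
  hφ.2.2.2 (freqNorm b k) (fn_pos hd hb hk).ne'

private lemma sw_nonneg (hφ : GoodBump φ) (j : ℤ) (k : Lat d) : 0 ≤ SW φ b j k := by
  refine tsum_nonneg fun j' => ?_
  split
  · exact hφ.2.1 _
  · exact le_rfl

private lemma sw_le_one (hd : 0 < d) (hb : ∀ i, 0 < b i) (hφ : GoodBump φ)
    {k : Lat d} (hk : k ≠ 0) (j : ℤ) : SW φ b j k ≤ 1 := by
  have hs := sw_hasSum hd hb hφ hk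
  have hsummable : Summable (fun j' : ℤ => if j' < j then blockW φ b j' k else 0) := by
    refine Summable.of_nonneg_of_le (fun j' => ?_) (fun j' => ?_) hs.summable
    · split
      · exact hφ.2.1 _
      · exact le_rfl
    · split
      · exact le_rfl
      · exact hφ.2.1 _
  calc SW φ b j k ≤ ∑' j' : ℤ, blockW φ b j' k := by
        refine Summable.tsum_le_tsum (fun j' => ?_) hsummable hs.summable
        split
        · exact le_rfl
        · exact hφ.2.1 _
    _ = 1 := hs.tsum_eq

private lemma sop_norm_le (hd : 0 < d) (hb : ∀ i, 0 < b i) (hφ : GoodBump φ)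
    (j : ℤ) (f : SF d) (k : Lat d) : ‖SOp φ b j f k‖ ≤ ‖f k‖ := by
  unfold SOp
  rcases eq_or_ne k 0 with rfl | hk
  · rw [if_pos rfl, norm_smul]
    simp
  · rw [if_neg hk, norm_smul, Real.norm_eq_abs,
      abs_of_nonneg (sw_nonneg hφ j k)]
    calc SW φ b j k * ‖f k‖ ≤ 1 * ‖f k‖ :=
          mul_le_mul_of_nonneg_right (sw_le_one hd hb hφ hk j) (norm_nonneg _)
      _ = ‖f k‖ := one_mul _

private lemma sop_support (hφ : GoodBump φ) {j : ℤ} {f : SF d} {k : Lat d}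
    (h : SOp φ b j f k ≠ 0) (hk : k ≠ 0) :
    ∃ j' < j, blockW φ b j' k ≠ 0 := by
  unfold SOp at h
  rw [if_neg hk] at h
  have hsw : SW φ b j k ≠ 0 := by
    intro h0
    rw [h0] at h
    simp at h
  by_contra hall
  push_neg at hall
  apply hsw
  unfold SW
  have : ∀ j' : ℤ, (if j' < j then blockW φ b j' k else 0) = 0 := by
    intro j'
    split
    · exact hall _ (by assumption)
    · rfl
  rw [tsum_congr this, tsum_zero]

private lemma sop_fn_le (hφ : GoodBump φ) {j : ℤ} {f : SF d} {k : Lat d}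
    (h : SOp φ b (j-2) f k ≠ 0) :
    freqNorm b k ≤ 1/3 * (2:ℝ)^j := by
  rcases eq_or_ne k 0 with rfl | hk
  · rw [fn_zero]
    positivity
  · obtain ⟨j', hj', hbw⟩ := sop_support hφ h hk
    have h2 := (blockW_bounds hφ hbw).2
    have h3 : (2:ℝ)^j' ≤ (2:ℝ)^(j-3) := zpow_le_zpow_right₀ one_le_two (by omega)
    have h4 : (8:ℝ)/3 * (2:ℝ)^(j-3) = 1/3 * (2:ℝ)^j := by
      rw [zpow_sub₀ (two_ne_zero), show ((2:ℝ)^(3:ℤ)) = 8 by norm_num]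
      ring
    nlinarith [zpow_pos (two_pos (α := ℝ)) j']

/-- spectral localization of the paraproduct terms -/
private lemma para_loc (hφ : GoodBump φ) {f g : SF d} {ℓ j : ℤ} {m : Lat d}
    (hm : blockW φ b ℓ m ≠ 0) (hj : j ∉ Finset.Icc (ℓ-2) (ℓ+2)) :
    mulC b (SOp φ b (j-2) f) (blockOp φ b j g) m = 0 := by
  unfold mulC
  rw [show (∑' k, SOp φ b (j-2) f k * blockOp φ b j g (m - k)) = 0 from ?_, mul_zero]
  have hterm : ∀ k, SOp φ b (j-2) f k * blockOp φ b j g (m - k) = 0 := by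
    intro k
    by_contra hne
    obtain ⟨hS, hG⟩ := mul_ne_zero_iff.mp hne
    have hg' : blockW φ b j (m - k) ≠ 0 := by
      intro h0
      apply hG
      unfold blockOp
      rw [h0, zero_smul]
    have hgb := blockW_bounds hφ hg'
    have hmb := blockW_bounds hφ hm
    have hkb := sop_fn_le hφ hS
    have ht1 : freqNorm b m ≤ freqNorm b k + freqNorm b (m - k) := by
      have heq : m = k + (m - k) := by abel
      calc freqNorm b m = freqNorm b (k + (m - k)) := by rw [← heq]
        _ ≤ _ := fn_add_le b k (m - k)
    have ht2 : freqNorm b (m - k) ≤ freqNorm b m + freqNorm b k := fn_sub_le b m k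
    simp only [Finset.mem_Icc, not_and_or, not_le] at hj
    have hℓj : (2:ℝ)^ℓ ≤ (2:ℝ)^(j+2) := by
      have h5 : (3:ℝ)/4 * 2^ℓ ≤ 3 * 2^j := by linarith [hmb.1, hgb.2]
      calc (2:ℝ)^ℓ ≤ 4 * 2^j := by linarith
        _ = 2^(j+2) := by
            rw [zpow_add₀ (two_ne_zero), show ((2:ℝ)^(2:ℤ)) = 4 by norm_num]
            ring
    have h1 : ℓ ≤ j + 2 := (zpow_le_zpow_iff_right₀ one_lt_two).mp hℓj
    have hjℓ : (2:ℝ)^j < (2:ℝ)^(ℓ+3) := by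
      have h6 : (3:ℝ)/4 * 2^j ≤ 8/3 * 2^ℓ + 1/3 * 2^j := by linarith [hgb.1, hmb.2]
      have h7 : (2:ℝ)^j ≤ 32/5 * 2^ℓ := by linarith
      calc (2:ℝ)^j ≤ 32/5 * 2^ℓ := h7
        _ < 8 * 2^ℓ := by nlinarith [zpow_pos (two_pos (α := ℝ)) ℓ]
        _ = 2^(ℓ+3) := by
            rw [zpow_add₀ (two_ne_zero), show ((2:ℝ)^(3:ℤ)) = 8 by norm_num]
            ring
    have h2 : j < ℓ + 3 := (zpow_lt_zpow_iff_right₀ one_lt_two).mp hjℓ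
    omega
  rw [tsum_congr hterm, tsum_zero]

end Stmt8Dom
section Stmt8Dom2

variable {d : ℕ} {b : Fin d → ℝ} {φ : ℝ → ℝ}

private lemma pow_half_sq (x : ℝ≥0∞) : (x ^ (1/2:ℝ)) ^ 2 = x := by
  rw [← ENNReal.rpow_two, ← ENNReal.rpow_mul]
  norm_num

private lemma sq_pow_half (x : ℝ≥0∞) : (x ^ 2) ^ (1/2:ℝ) = x := by
  rw [← ENNReal.rpow_two, ← ENNReal.rpow_mul]
  norm_num

private lemma eL2_le_of (c : SF d) (u : Lat d → ℝ≥0∞) (h : ∀ m, (‖c m‖₊ : ℝ≥0∞) ≤ u m) :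
    eL2 c ≤ (∑' m, u m ^ 2) ^ (1/2:ℝ) := by
  unfold eL2
  exact ENNReal.rpow_le_rpow
    (ENNReal.tsum_le_tsum fun m => pow_le_pow_left₀ (zero_le) (h m) 2) (by norm_num)

private lemma eL2_eq_zero {c : SF d} (h : ∀ m, c m = 0) : eL2 c = 0 := by
  unfold eL2
  have h2 : ∀ m : Lat d, (‖c m‖₊ : ℝ≥0∞) ^ 2 = 0 := fun m => by rw [h m]; simp
  rw [tsum_congr h2, tsum_zero, ENNReal.zero_rpow_of_pos (by norm_num)]

private lemma young8 (b : Fin d → ℝ) (F G : SF d) :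
    eL2 (mulC b F G) ≤ (‖((Real.sqrt (vol b) : ℂ))⁻¹‖₊ : ℝ≥0∞) * l1F F * eL2 G := by
  set cv := (‖((Real.sqrt (vol b) : ℂ))⁻¹‖₊ : ℝ≥0∞) with hcv
  set A : Lat d → ℝ≥0∞ := fun k => (‖F k‖₊ : ℝ≥0∞) with hA
  set Cc : Lat d → ℝ≥0∞ := fun k => (‖G k‖₊ : ℝ≥0∞) with hC
  have hpt : ∀ m, (‖mulC b F G m‖₊ : ℝ≥0∞) ≤ cv * ∑' k, A k * Cc (m - k) := by
    intro m
    calc (‖mulC b F G m‖₊ : ℝ≥0∞)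
        = cv * (‖∑' k, F k * G (m - k)‖₊ : ℝ≥0∞) := by
          rw [show mulC b F G m = ((Real.sqrt (vol b) : ℂ))⁻¹ * ∑' k, F k * G (m-k) from rfl,
            nnnorm_mul, ENNReal.coe_mul]
      _ ≤ cv * ∑' k, A k * Cc (m - k) := by
          refine mul_le_mul_right ?_ _
          refine (ennnorm_tsum_le8 _).trans (le_of_eq (tsum_congr fun k => ?_))
          rw [nnnorm_mul, ENNReal.coe_mul]
  have key : ∀ m : Lat d, (∑' k, A k * Cc (m - k)) ^ 2
      ≤ (∑' k, A k) * (∑' k, A k * Cc (m - k) ^ 2) := by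
    intro m
    have h := tsum_mul_le_l2 (fun k => A k ^ (1/2:ℝ)) (fun k => A k ^ (1/2:ℝ) * Cc (m - k))
    have e1 : ∀ k : Lat d, A k ^ (1/2:ℝ) * (A k ^ (1/2:ℝ) * Cc (m - k)) = A k * Cc (m - k) := by
      intro k
      rw [← mul_assoc, ← ENNReal.rpow_add_of_nonneg _ _ (by norm_num) (by norm_num)]
      norm_num
    have e3 : ∀ k : Lat d, (A k ^ (1/2:ℝ) * Cc (m - k)) ^ 2 = A k * Cc (m - k) ^ 2 := by
      intro k
      rw [mul_pow, pow_half_sq]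
    simp only [e1, pow_half_sq, e3] at h
    calc (∑' k, A k * Cc (m - k)) ^ 2
        ≤ ((∑' k, A k) ^ (1/2:ℝ) * (∑' k, A k * Cc (m - k) ^ 2) ^ (1/2:ℝ)) ^ 2 :=
          pow_le_pow_left₀ (zero_le) h 2
      _ = (∑' k, A k) * (∑' k, A k * Cc (m - k) ^ 2) := by
          rw [mul_pow, pow_half_sq, pow_half_sq]
  have step3 : ∑' m : Lat d, (∑' k, A k * Cc (m - k)) ^ 2
      ≤ (∑' k, A k) ^ 2 * ∑' k, Cc k ^ 2 := by
    calc ∑' m : Lat d, (∑' k, A k * Cc (m - k)) ^ 2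
        ≤ ∑' m : Lat d, (∑' k, A k) * (∑' k, A k * Cc (m - k) ^ 2) :=
          ENNReal.tsum_le_tsum key
      _ = (∑' k, A k) * ∑' m : Lat d, ∑' k, A k * Cc (m - k) ^ 2 := ENNReal.tsum_mul_left
      _ = (∑' k, A k) * ∑' k : Lat d, ∑' m : Lat d, A k * Cc (m - k) ^ 2 := by
          rw [ENNReal.tsum_comm]
      _ = (∑' k, A k) * ∑' k : Lat d, A k * ∑' m : Lat d, Cc (m - k) ^ 2 := by
          congr 1
          exact tsum_congr fun k => ENNReal.tsum_mul_left
      _ = (∑' k, A k) * ∑' k : Lat d, A k * ∑' m : Lat d, Cc m ^ 2 := by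
          congr 1
          refine tsum_congr fun k => ?_
          congr 1
          exact (Equiv.subRight k).tsum_eq (fun m => Cc m ^ 2)
      _ = (∑' k, A k) ^ 2 * ∑' k, Cc k ^ 2 := by
          rw [ENNReal.tsum_mul_right, sq]
          ring
  calc eL2 (mulC b F G)
      ≤ (∑' m : Lat d, (cv * ∑' k, A k * Cc (m - k)) ^ 2) ^ (1/2:ℝ) := eL2_le_of _ _ hpt
    _ = cv * (∑' m : Lat d, (∑' k, A k * Cc (m - k)) ^ 2) ^ (1/2:ℝ) := by
        simp_rw [mul_pow]
        rw [ENNReal.tsum_mul_left,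
          ENNReal.mul_rpow_of_nonneg _ _ (by norm_num : (0:ℝ) ≤ 1/2), sq_pow_half]
    _ ≤ cv * ((∑' k, A k) ^ 2 * ∑' k, Cc k ^ 2) ^ (1/2:ℝ) :=
        mul_le_mul_right (ENNReal.rpow_le_rpow step3 (by norm_num)) _
    _ = cv * ((∑' k, A k) * (∑' k, Cc k ^ 2) ^ (1/2:ℝ)) := by
        rw [ENNReal.mul_rpow_of_nonneg _ _ (by norm_num : (0:ℝ) ≤ 1/2), sq_pow_half]
    _ = cv * l1F F * eL2 G := by
        rw [← mul_assoc]
        rfl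

private def Kcnt (b : Fin d → ℝ) : ℝ≥0∞ :=
  ENNReal.ofReal (Real.sqrt (∏ i, (16/3 * b i + 8/(3 * m0 b))))

private lemma bernstein8 (hd : 0 < d) (hb : ∀ i, 0 < b i) (hφ : GoodBump φ)
    (f : SF d) (j : ℤ) :
    l1F (blockOp φ b j f) ≤ Kcnt b * (2:ℝ≥0∞) ^ ((j:ℝ) * ((d:ℝ)/2)) * eL2 (blockOp φ b j f) := by
  have hm0 := m0_pos hd hb
  by_cases hj : 3/8 * m0 b ≤ (2:ℝ)^j
  case neg =>
    have hz : ∀ k, blockOp φ b j f k = 0 := by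
      intro k
      have hW : blockW φ b j k = 0 := by
        by_contra hW
        exact hj (blockW_small hd hb hφ hW)
      unfold blockOp
      rw [hW, zero_smul]
    unfold l1F
    rw [tsum_congr (fun k => by rw [hz k]; simp :
      ∀ k : Lat d, (‖blockOp φ b j f k‖₊ : ℝ≥0∞) = 0), tsum_zero]
    exact zero_le
  case pos =>
    set R : ℝ := 8/3 * (2:ℝ)^j with hR
    have h2jpos : (0:ℝ) < (2:ℝ)^j := zpow_pos two_pos _
    have hRpos : 0 < R := by rw [hR]; positivity
    set M : Fin d → ℤ := fun i => ⌊R * b i⌋ with hM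
    set S : Finset (Lat d) := Fintype.piFinset (fun i => Finset.Icc (-(M i)) (M i)) with hS
    have hsupp : ∀ k : Lat d, k ∉ S → blockOp φ b j f k = 0 := by
      intro k hk
      have hex : ∃ i, k i ∉ Finset.Icc (-(M i)) (M i) := by
        by_contra hall
        push_neg at hall
        exact hk (Fintype.mem_piFinset.mpr hall)
      obtain ⟨i, hi⟩ := hex
      rw [Finset.mem_Icc, not_and_or, not_le, not_le] at hi
      have habs : M i < |k i| := by
        rcases hi with h | h
        · exact lt_of_lt_of_le (by omega) (neg_le_abs (k i))
        · exact lt_of_lt_of_le h (le_abs_self _)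
      have hreal : R * b i < |(k i : ℝ)| := by
        have h1 : R * b i < (M i : ℝ) + 1 := Int.lt_floor_add_one _
        have h2 : (M i : ℝ) + 1 ≤ |(k i : ℝ)| := by
          rw [← Int.cast_abs]
          exact_mod_cast habs
        linarith
      have hfn : R < freqNorm b k := by
        have h3 : R < |(k i : ℝ)| / b i := by
          rw [lt_div_iff₀ (hb i)]
          linarith
        refine lt_of_lt_of_le h3 (le_trans (le_of_eq ?_) (abs_freq_le b k i))
        unfold freq
        rw [abs_div, abs_of_pos (hb i)]
      have hW : blockW φ b j k = 0 := by
        by_contra hW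
        have := (blockW_bounds hφ hW).2
        rw [← hR] at this
        linarith
      unfold blockOp
      rw [hW, zero_smul]
    have hl1 : l1F (blockOp φ b j f)
        ≤ ((S.card : ℝ≥0∞)) ^ (1/2:ℝ) * eL2 (blockOp φ b j f) := by
      have hind : ∀ k : Lat d, (‖blockOp φ b j f k‖₊ : ℝ≥0∞)
          = (if k ∈ S then (1:ℝ≥0∞) else 0) * ‖blockOp φ b j f k‖₊ := by
        intro k
        split_ifs with h
        · rw [one_mul]
        · rw [hsupp k h]
          simp
      have hsum1 : (∑' k : Lat d, (if k ∈ S then (1:ℝ≥0∞) else 0) ^ 2) = (S.card : ℝ≥0∞) := by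
        calc ∑' k : Lat d, (if k ∈ S then (1:ℝ≥0∞) else 0) ^ 2
            = ∑' k : Lat d, (if k ∈ S then (1:ℝ≥0∞) else 0) :=
              tsum_congr fun k => by split_ifs <;> simp
          _ = ∑ k ∈ S, (1:ℝ≥0∞) := (tsum_eq_sum (fun k hk => if_neg hk)).trans
              (Finset.sum_congr rfl fun k hk => if_pos hk)
          _ = (S.card : ℝ≥0∞) := by simp
      unfold l1F
      calc ∑' k : Lat d, (‖blockOp φ b j f k‖₊:ℝ≥0∞)
          = ∑' k : Lat d, (if k ∈ S then (1:ℝ≥0∞) else 0) * ‖blockOp φ b j f k‖₊ :=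
            tsum_congr hind
        _ ≤ (∑' k : Lat d, (if k ∈ S then (1:ℝ≥0∞) else 0) ^ 2) ^ (1/2:ℝ)
            * (∑' k : Lat d, ((‖blockOp φ b j f k‖₊:ℝ≥0∞)) ^ 2) ^ (1/2:ℝ) := tsum_mul_le_l2 _ _
        _ = ((S.card : ℝ≥0∞)) ^ (1/2:ℝ) * eL2 (blockOp φ b j f) := by rw [hsum1]; rfl
    set Kr : ℝ := ∏ i, (16/3 * b i + 8/(3 * m0 b)) with hKr
    have hKrpos : 0 < Kr := Finset.prod_pos fun i _ =>
      add_pos (mul_pos (by norm_num) (hb i)) (div_pos (by norm_num) (by positivity))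
    have h1 : (S.card : ℝ) ≤ Kr * ((2:ℝ)^j) ^ (d:ℕ) := by
      rw [hS, Fintype.card_piFinset]
      push_cast
      calc ∏ i, ((Finset.Icc (-(M i)) (M i)).card : ℝ)
          ≤ ∏ i, ((16/3 * b i + 8/(3 * m0 b)) * (2:ℝ)^j) := by
            refine Finset.prod_le_prod (fun i _ => by positivity) (fun i _ => ?_)
            rw [Int.card_Icc]
            have hMnn : 0 ≤ M i := Int.floor_nonneg.mpr (mul_pos hRpos (hb i)).le
            rw [show M i + 1 - -(M i) = 2*M i + 1 from by ring]
            have hcast : (((2*M i + 1).toNat : ℕ) : ℝ) = 2*(M i:ℝ) + 1 := by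
              have h0 : (0:ℤ) ≤ 2*M i + 1 := by omega
              exact_mod_cast Int.toNat_of_nonneg h0
            rw [hcast]
            have hfl : (M i : ℝ) ≤ R * b i := Int.floor_le _
            have hone : (1:ℝ) ≤ 8/(3 * m0 b) * (2:ℝ)^j := by
              rw [div_mul_eq_mul_div, le_div_iff₀ (by positivity)]
              linarith
            calc 2*(M i:ℝ) + 1 ≤ 2*(R*b i) + 8/(3*m0 b)*2^j := by linarith
              _ = (16/3*b i + 8/(3*m0 b)) * 2^j := by rw [hR]; ring
        _ = Kr * ((2:ℝ)^j)^(d:ℕ) := by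
            rw [Finset.prod_mul_distrib, Finset.prod_const, hKr]
            congr 1
            rw [Finset.card_univ, Fintype.card_fin]
    have h2 : ((2:ℝ)^(j:ℤ)) ^ (d:ℕ) = (2:ℝ) ^ ((j:ℝ) * d) := by
      rw [← Real.rpow_natCast ((2:ℝ)^(j:ℤ)) d, ← Real.rpow_intCast 2 j,
        ← Real.rpow_mul (by norm_num)]
    have hcard : ((S.card : ℝ≥0∞)) ^ (1/2:ℝ) ≤ Kcnt b * (2:ℝ≥0∞) ^ ((j:ℝ)*((d:ℝ)/2)) := by
      have h3 : (S.card : ℝ≥0∞) ≤ ENNReal.ofReal Kr * ENNReal.ofReal ((2:ℝ)^((j:ℝ)*d)) := by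
        rw [← ENNReal.ofReal_mul hKrpos.le, ← ENNReal.ofReal_natCast]
        exact ENNReal.ofReal_le_ofReal (by rw [← h2]; exact h1)
      calc ((S.card : ℝ≥0∞)) ^ (1/2:ℝ)
          ≤ (ENNReal.ofReal Kr * ENNReal.ofReal ((2:ℝ)^((j:ℝ)*d))) ^ (1/2:ℝ) :=
            ENNReal.rpow_le_rpow h3 (by norm_num)
        _ = ENNReal.ofReal Kr ^ (1/2:ℝ) * (ENNReal.ofReal ((2:ℝ)^((j:ℝ)*d))) ^ (1/2:ℝ) :=
            ENNReal.mul_rpow_of_nonneg _ _ (by norm_num)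
        _ = Kcnt b * (2:ℝ≥0∞) ^ ((j:ℝ)*((d:ℝ)/2)) := by
            congr 1
            · rw [ENNReal.ofReal_rpow_of_nonneg hKrpos.le (by norm_num : (0:ℝ) ≤ 1/2)]
              unfold Kcnt
              rw [← hKr, Real.sqrt_eq_rpow]
            · rw [← ENNReal.ofReal_rpow_of_pos (by norm_num : (0:ℝ) < 2),
                ENNReal.ofReal_ofNat, ← ENNReal.rpow_mul,
                show ((j:ℝ)*d)*(1/2) = (j:ℝ)*((d:ℝ)/2) from by ring]
    exact hl1.trans (mul_le_mul_left hcard _)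

end Stmt8Dom2
section Stmt8Dom3

open scoped NNReal

variable {d : ℕ} {b : Fin d → ℝ} {φ : ℝ → ℝ}

private lemma two_rpow_lt_top (y : ℝ) : (2:ℝ≥0∞) ^ y < ⊤ := by
  rw [show (2:ℝ≥0∞) = ((2:ℝ≥0):ℝ≥0∞) from rfl, ← ENNReal.coe_rpow_of_ne_zero (by norm_num)]
  exact ENNReal.coe_lt_top

private lemma besov_zero_le (φ : ℝ → ℝ) (b : Fin d → ℝ) (s₁ : ℝ) (f : SF d) :
    (‖f 0‖₊ : ℝ≥0∞) ≤ besovN φ b s₁ 1 f := by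
  unfold besovN
  rw [lr_one8]
  exact ENNReal.le_tsum none

private lemma besov_blocks_le (φ : ℝ → ℝ) (b : Fin d → ℝ) (s₁ : ℝ) (f : SF d) :
    ∑' j : ℤ, bw φ b s₁ f j ≤ besovN φ b s₁ 1 f := by
  unfold besovN
  rw [lr_one8]
  exact ENNReal.tsum_comp_le_tsum_of_injective (Option.some_injective ℤ) _

private def Jm (b : Fin d → ℝ) : ℤ := ⌈Real.logb 2 (3/32 * m0 b)⌉

private def Km (b : Fin d → ℝ) (c : ℝ) : ℝ≥0∞ := (2:ℝ≥0∞) ^ (-(Jm b : ℝ) * c)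

private lemma sop_l1 (hd : 0 < d) (hb : ∀ i, 0 < b i) (hφ : GoodBump φ)
    {s₁ : ℝ} (hs₁ : s₁ ≤ (d:ℝ)/2) (f : SF d) {j : ℤ} (hj : 3/32 * m0 b ≤ (2:ℝ)^j) :
    l1F (SOp φ b (j-2) f) ≤ (Km b ((d:ℝ)/2 - s₁) + Kcnt b)
      * (2:ℝ≥0∞) ^ ((j:ℝ) * ((d:ℝ)/2 - s₁)) * besovN φ b s₁ 1 f := by
  have hm0 := m0_pos hd hb
  set c : ℝ := (d:ℝ)/2 - s₁ with hc
  have hc0 : 0 ≤ c := by rw [hc]; linarith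
  set Nf := besovN φ b s₁ 1 f with hNf
  -- step 1 : pointwise splitting of `SOp`
  have hpt : ∀ k : Lat d, (‖SOp φ b (j-2) f k‖₊ : ℝ≥0∞) ≤
      (if k = 0 then (‖f 0‖₊ : ℝ≥0∞) else 0)
      + ∑' j' : ℤ, (if j' < j - 2 then (‖blockOp φ b j' f k‖₊ : ℝ≥0∞) else 0) := by
    intro k
    rcases eq_or_ne k 0 with rfl | hk
    · rw [if_pos rfl]
      refine le_trans (le_of_eq ?_) le_self_add
      show (‖SOp φ b (j-2) f 0‖₊ : ℝ≥0∞) = (‖f 0‖₊ : ℝ≥0∞)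
      unfold SOp
      rw [if_pos rfl, one_smul]
    · rw [if_neg hk, zero_add]
      have hnn : ∀ j' : ℤ, 0 ≤ (if j' < j - 2 then blockW φ b j' k else 0) := by
        intro j'
        split
        · exact hφ.2.1 _
        · exact le_rfl
      have hswsum : Summable (fun j' : ℤ => if j' < j - 2 then blockW φ b j' k else 0) := by
        refine Summable.of_nonneg_of_le hnn (fun j' => ?_) (sw_hasSum hd hb hφ hk).summable
        split
        · exact le_rfl
        · exact hφ.2.1 _
      have heq : (‖SOp φ b (j-2) f k‖₊ : ℝ≥0∞)
          = ENNReal.ofReal (SW φ b (j-2) k) * (‖f k‖₊ : ℝ≥0∞) := by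
        unfold SOp
        rw [if_neg hk, nnnorm_smul, ENNReal.coe_mul,
          (show (‖SW φ b (j-2) k‖₊ : ℝ≥0∞) = ENNReal.ofReal (SW φ b (j-2) k) from Real.enorm_eq_ofReal (sw_nonneg hφ _ _))]
      rw [heq]
      have hof : ENNReal.ofReal (SW φ b (j-2) k)
          = ∑' j' : ℤ, ENNReal.ofReal (if j' < j - 2 then blockW φ b j' k else 0) := by
        unfold SW
        exact ENNReal.ofReal_tsum_of_nonneg hnn hswsum
      rw [hof, ← ENNReal.tsum_mul_right]
      refine le_of_eq (tsum_congr fun j' => ?_)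
      split_ifs with h
      · show ENNReal.ofReal (blockW φ b j' k) * (‖f k‖₊ : ℝ≥0∞) = (‖blockOp φ b j' f k‖₊ : ℝ≥0∞)
        unfold blockOp
        rw [nnnorm_smul, ENNReal.coe_mul, (show (‖blockW φ b j' k‖₊ : ℝ≥0∞) = ENNReal.ofReal (blockW φ b j' k) from Real.enorm_eq_ofReal (blockW_nonneg hφ _ _))]
      · simp
  have step1 : l1F (SOp φ b (j-2) f) ≤ (‖f 0‖₊ : ℝ≥0∞)
      + ∑' j' : ℤ, (if j' < j - 2 then l1F (blockOp φ b j' f) else 0) := by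
    unfold l1F
    refine (ENNReal.tsum_le_tsum hpt).trans ?_
    rw [ENNReal.tsum_add]
    refine add_le_add (le_of_eq (tsum_ite_eq 0 _)) (le_of_eq ?_)
    rw [ENNReal.tsum_comm]
    refine tsum_congr fun j' => ?_
    split_ifs with h
    · rfl
    · exact tsum_zero
  -- step 2 : each dyadic block
  have step2 : ∑' j' : ℤ, (if j' < j - 2 then l1F (blockOp φ b j' f) else 0)
      ≤ Kcnt b * (2:ℝ≥0∞) ^ ((j:ℝ) * c) * Nf := by
    have hterm : ∀ j' : ℤ, (if j' < j - 2 then l1F (blockOp φ b j' f) else 0)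
        ≤ Kcnt b * (2:ℝ≥0∞) ^ ((j:ℝ) * c) * bw φ b s₁ f j' := by
      intro j'
      split_ifs with h
      · refine (bernstein8 hd hb hφ f j').trans ?_
        have hsplit : (2:ℝ≥0∞) ^ ((j':ℝ) * ((d:ℝ)/2))
            = (2:ℝ≥0∞) ^ ((j':ℝ) * c) * (2:ℝ≥0∞) ^ ((j':ℝ) * s₁) := by
          rw [← ENNReal.rpow_add _ _ two_ne_zero ENNReal.ofNat_ne_top]
          congr 1
          rw [hc]; ring
        have hmono : (2:ℝ≥0∞) ^ ((j':ℝ) * c) ≤ (2:ℝ≥0∞) ^ ((j:ℝ) * c) := by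
          refine ENNReal.rpow_le_rpow_of_exponent_le one_le_two ?_
          have : (j':ℝ) ≤ (j:ℝ) := by exact_mod_cast (by omega : j' ≤ j)
          exact mul_le_mul_of_nonneg_right this hc0
        calc Kcnt b * (2:ℝ≥0∞) ^ ((j':ℝ) * ((d:ℝ)/2)) * eL2 (blockOp φ b j' f)
            = Kcnt b * ((2:ℝ≥0∞) ^ ((j':ℝ) * c) * ((2:ℝ≥0∞) ^ ((j':ℝ) * s₁)
                * eL2 (blockOp φ b j' f))) := by rw [hsplit]; ring
          _ ≤ Kcnt b * ((2:ℝ≥0∞) ^ ((j:ℝ) * c) * ((2:ℝ≥0∞) ^ ((j':ℝ) * s₁)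
                * eL2 (blockOp φ b j' f))) :=
              mul_le_mul_right (mul_le_mul_left hmono _) _
          _ = Kcnt b * (2:ℝ≥0∞) ^ ((j:ℝ) * c) * bw φ b s₁ f j' := by
              unfold bw; ring
      · exact zero_le
    calc ∑' j' : ℤ, (if j' < j - 2 then l1F (blockOp φ b j' f) else 0)
        ≤ ∑' j' : ℤ, Kcnt b * (2:ℝ≥0∞) ^ ((j:ℝ) * c) * bw φ b s₁ f j' :=
          ENNReal.tsum_le_tsum hterm
      _ = Kcnt b * (2:ℝ≥0∞) ^ ((j:ℝ) * c) * ∑' j' : ℤ, bw φ b s₁ f j' :=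
          ENNReal.tsum_mul_left
      _ ≤ Kcnt b * (2:ℝ≥0∞) ^ ((j:ℝ) * c) * Nf :=
          mul_le_mul_right (besov_blocks_le φ b s₁ f) _
  -- step 3 : the zero mode
  have step3 : (‖f 0‖₊ : ℝ≥0∞) ≤ Km b c * (2:ℝ≥0∞) ^ ((j:ℝ) * c) * Nf := by
    have hρ : (0:ℝ) < 3/32 * m0 b := by positivity
    have hJ : Jm b ≤ j := by
      refine Int.ceil_le.mpr ?_
      have h1 : Real.logb 2 (3/32 * m0 b) ≤ Real.logb 2 ((2:ℝ)^j) :=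
        Real.logb_le_logb_of_le (by norm_num) hρ hj
      have h2 : Real.logb 2 ((2:ℝ)^j) = j := by
        rw [show ((2:ℝ)^(j:ℤ)) = (2:ℝ)^((j:ℝ)) from (Real.rpow_intCast 2 j).symm]
        exact Real.logb_rpow (by norm_num) (by norm_num)
      rw [h2] at h1
      exact h1
    have hone : (1:ℝ≥0∞) ≤ Km b c * (2:ℝ≥0∞) ^ ((j:ℝ) * c) := by
      unfold Km
      rw [← ENNReal.rpow_add _ _ two_ne_zero ENNReal.ofNat_ne_top]
      rw [show (1:ℝ≥0∞) = (2:ℝ≥0∞) ^ (0:ℝ) from by rw [ENNReal.rpow_zero]]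
      refine ENNReal.rpow_le_rpow_of_exponent_le one_le_two ?_
      have : (Jm b : ℝ) ≤ (j:ℝ) := by exact_mod_cast hJ
      nlinarith
    calc (‖f 0‖₊ : ℝ≥0∞) = 1 * (‖f 0‖₊ : ℝ≥0∞) := (one_mul _).symm
      _ ≤ (Km b c * (2:ℝ≥0∞) ^ ((j:ℝ) * c)) * Nf :=
        mul_le_mul' hone (besov_zero_le φ b s₁ f)
      _ = Km b c * (2:ℝ≥0∞) ^ ((j:ℝ) * c) * Nf := by ring
  calc l1F (SOp φ b (j-2) f)
      ≤ (‖f 0‖₊ : ℝ≥0∞)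
        + ∑' j' : ℤ, (if j' < j - 2 then l1F (blockOp φ b j' f) else 0) := step1
    _ ≤ Km b c * (2:ℝ≥0∞) ^ ((j:ℝ) * c) * Nf
        + Kcnt b * (2:ℝ≥0∞) ^ ((j:ℝ) * c) * Nf := add_le_add step3 step2
    _ = (Km b c + Kcnt b) * (2:ℝ≥0∞) ^ ((j:ℝ) * c) * Nf := by ring

private lemma block_bound (hd : 0 < d) (hb : ∀ i, 0 < b i) (hφ : GoodBump φ)
    {s s₁ s₂ : ℝ} (hsum : s + (d:ℝ)/2 = s₁ + s₂) (hs₁ : s₁ ≤ (d:ℝ)/2)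
    {ζ : ℝ} (f g : SF d) (ℓ : ℤ) :
    (if ζ ≤ (2:ℝ)^ℓ then bw φ b s (paraC φ b f g) ℓ else 0) ≤
      ∑ i ∈ Finset.Icc (-2:ℤ) 2,
        ((‖((Real.sqrt (vol b) : ℂ))⁻¹‖₊ : ℝ≥0∞) * (Km b ((d:ℝ)/2 - s₁) + Kcnt b)
            * (2:ℝ≥0∞) ^ (2*|s|) * besovN φ b s₁ 1 f)
          * (if ζ/4 ≤ (2:ℝ)^(ℓ+i) then bw φ b s₂ g (ℓ+i) else 0) := by
  set cv : ℝ≥0∞ := (‖((Real.sqrt (vol b) : ℂ))⁻¹‖₊ : ℝ≥0∞) with hcv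
  set Nf := besovN φ b s₁ 1 f with hNf
  split_ifs with hζℓ
  swap
  · exact zero_le
  by_cases h0 : eL2 (blockOp φ b ℓ (paraC φ b f g)) = 0
  · unfold bw
    rw [h0, mul_zero]
    exact zero_le
  have hex : ∃ m, blockOp φ b ℓ (paraC φ b f g) m ≠ 0 := by
    by_contra hall
    push_neg at hall
    exact h0 (eL2_eq_zero hall)
  obtain ⟨m₁, hm₁⟩ := hex
  have hWm₁ : blockW φ b ℓ m₁ ≠ 0 := by
    intro hw
    apply hm₁
    unfold blockOp
    rw [hw, zero_smul]
  have h2ℓ : 3/8 * m0 b ≤ (2:ℝ)^ℓ := blockW_small hd hb hφ hWm₁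
  have h2ℓ4 : (2:ℝ)^(ℓ-2) = (2:ℝ)^ℓ/4 := by
    rw [zpow_sub₀ two_ne_zero, show ((2:ℝ)^(2:ℤ)) = 4 by norm_num]
  have hjm : ∀ j ∈ Finset.Icc (ℓ-2) (ℓ+2), 3/32 * m0 b ≤ (2:ℝ)^j := by
    intro j hj
    rw [Finset.mem_Icc] at hj
    have h1 : (2:ℝ)^(ℓ-2) ≤ 2^j := zpow_le_zpow_right₀ one_le_two hj.1
    linarith
  have hζ4 : ∀ j ∈ Finset.Icc (ℓ-2) (ℓ+2), ζ/4 ≤ (2:ℝ)^j := by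
    intro j hj
    rw [Finset.mem_Icc] at hj
    have h1 : (2:ℝ)^(ℓ-2) ≤ 2^j := zpow_le_zpow_right₀ one_le_two hj.1
    linarith
  have hpt : ∀ m : Lat d, (‖blockOp φ b ℓ (paraC φ b f g) m‖₊ : ℝ≥0∞) ≤
      ∑ j ∈ Finset.Icc (ℓ-2) (ℓ+2),
        (‖mulC b (SOp φ b (j-2) f) (blockOp φ b j g) m‖₊ : ℝ≥0∞) := by
    intro m
    by_cases hW : blockW φ b ℓ m = 0
    · rw [show blockOp φ b ℓ (paraC φ b f g) m = 0 from by unfold blockOp; rw [hW, zero_smul]]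
      simp
    · have hpm : paraC φ b f g m
          = ∑ j ∈ Finset.Icc (ℓ-2) (ℓ+2), mulC b (SOp φ b (j-2) f) (blockOp φ b j g) m :=
        tsum_eq_sum (fun j hj => para_loc hφ hW hj)
      calc (‖blockOp φ b ℓ (paraC φ b f g) m‖₊ : ℝ≥0∞)
          ≤ (‖paraC φ b f g m‖₊ : ℝ≥0∞) := by
            show (‖blockW φ b ℓ m • paraC φ b f g m‖₊ : ℝ≥0∞) ≤ _
            rw [nnnorm_smul, ENNReal.coe_mul,
              (show (‖blockW φ b ℓ m‖₊ : ℝ≥0∞) = ENNReal.ofReal (blockW φ b ℓ m) from Real.enorm_eq_ofReal (blockW_nonneg hφ _ _))]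
            calc ENNReal.ofReal (blockW φ b ℓ m) * (‖paraC φ b f g m‖₊:ℝ≥0∞)
                ≤ 1 * (‖paraC φ b f g m‖₊:ℝ≥0∞) := by
                  refine mul_le_mul_left ?_ _
                  rw [← ENNReal.ofReal_one]
                  exact ENNReal.ofReal_le_ofReal (blockW_le_one hφ _ _)
              _ = _ := one_mul _
        _ ≤ _ := by
            rw [hpm]
            refine le_trans (ENNReal.coe_le_coe.mpr (nnnorm_sum_le _ _)) ?_
            rw [ENNReal.coe_finset_sum]
  have hbl : eL2 (blockOp φ b ℓ (paraC φ b f g)) ≤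
      ∑ j ∈ Finset.Icc (ℓ-2) (ℓ+2), eL2 (mulC b (SOp φ b (j-2) f) (blockOp φ b j g)) :=
    (eL2_le_of _ _ hpt).trans (l2_sum_le8 _ _)
  have hmain : bw φ b s (paraC φ b f g) ℓ ≤
      ∑ j ∈ Finset.Icc (ℓ-2) (ℓ+2),
        (cv * (Km b ((d:ℝ)/2 - s₁) + Kcnt b) * (2:ℝ≥0∞) ^ (2*|s|) * Nf)
          * (if ζ/4 ≤ (2:ℝ)^j then bw φ b s₂ g j else 0) := by
    unfold bw
    refine le_trans (mul_le_mul_right hbl _) ?_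
    rw [Finset.mul_sum]
    refine Finset.sum_le_sum fun j hj => ?_
    have hmem := Finset.mem_Icc.mp hj
    have hexp : (2:ℝ≥0∞)^((ℓ:ℝ)*s) * (2:ℝ≥0∞)^((j:ℝ)*((d:ℝ)/2 - s₁))
        ≤ (2:ℝ≥0∞)^(2*|s|) * (2:ℝ≥0∞)^((j:ℝ)*s₂) := by
      rw [← ENNReal.rpow_add _ _ two_ne_zero ENNReal.ofNat_ne_top,
        ← ENNReal.rpow_add _ _ two_ne_zero ENNReal.ofNat_ne_top]
      refine ENNReal.rpow_le_rpow_of_exponent_le one_le_two ?_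
      have habs : ((ℓ:ℝ) - j) * s ≤ 2*|s| := by
        have h1 : |ℓ - j| ≤ 2 := by rw [abs_le]; omega
        calc ((ℓ:ℝ) - j)*s ≤ |((ℓ:ℝ)-j)*s| := le_abs_self _
          _ = |(ℓ:ℝ)-j| * |s| := abs_mul _ _
          _ ≤ 2 * |s| := by
              refine mul_le_mul_of_nonneg_right ?_ (abs_nonneg s)
              rw [show ((ℓ:ℝ) - j) = ((ℓ - j : ℤ) : ℝ) from by push_cast; ring, ← Int.cast_abs]
              exact_mod_cast h1
      have hs2 : (j:ℝ)*s₂ = (j:ℝ)*s + (j:ℝ)*((d:ℝ)/2 - s₁) := by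
        have : s₂ = s + ((d:ℝ)/2 - s₁) := by linarith
        rw [this]; ring
      linarith
    calc (2:ℝ≥0∞)^((ℓ:ℝ)*s) * eL2 (mulC b (SOp φ b (j-2) f) (blockOp φ b j g))
        ≤ (2:ℝ≥0∞)^((ℓ:ℝ)*s) * (cv * l1F (SOp φ b (j-2) f) * eL2 (blockOp φ b j g)) :=
          mul_le_mul_right (young8 b _ _) _
      _ ≤ (2:ℝ≥0∞)^((ℓ:ℝ)*s) * (cv * ((Km b ((d:ℝ)/2 - s₁) + Kcnt b)
            * (2:ℝ≥0∞) ^ ((j:ℝ)*((d:ℝ)/2 - s₁)) * Nf) * eL2 (blockOp φ b j g)) := by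
          refine mul_le_mul_right (mul_le_mul_left (mul_le_mul_right ?_ cv) _) _
          exact sop_l1 hd hb hφ hs₁ f (hjm j hj)
      _ = (cv * (Km b ((d:ℝ)/2 - s₁) + Kcnt b) * Nf)
            * (((2:ℝ≥0∞)^((ℓ:ℝ)*s) * (2:ℝ≥0∞)^((j:ℝ)*((d:ℝ)/2 - s₁)))
              * eL2 (blockOp φ b j g)) := by ring
      _ ≤ (cv * (Km b ((d:ℝ)/2 - s₁) + Kcnt b) * Nf)
            * (((2:ℝ≥0∞)^(2*|s|) * (2:ℝ≥0∞)^((j:ℝ)*s₂)) * eL2 (blockOp φ b j g)) :=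
          mul_le_mul_right (mul_le_mul_left hexp _) _
      _ = (cv * (Km b ((d:ℝ)/2 - s₁) + Kcnt b) * (2:ℝ≥0∞) ^ (2*|s|) * Nf)
            * bw φ b s₂ g j := by unfold bw; ring
      _ = (cv * (Km b ((d:ℝ)/2 - s₁) + Kcnt b) * (2:ℝ≥0∞) ^ (2*|s|) * Nf)
            * (if ζ/4 ≤ (2:ℝ)^j then bw φ b s₂ g j else 0) := by
          rw [if_pos (hζ4 j hj)]
  refine hmain.trans (le_of_eq ?_)
  rw [show Finset.Icc (ℓ-2) (ℓ+2) = (Finset.Icc (-2:ℤ) 2).map (addLeftEmbedding ℓ) from by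
      rw [Finset.map_add_left_Icc]
      congr 1 <;> ring,
    Finset.sum_map]
  refine Finset.sum_congr rfl fun i _ => ?_
  rw [addLeftEmbedding_apply]

end Stmt8Dom3
/-- (Paraproduct high-frequency estimate.) If `s + d/2 = s₁ + s₂` and
`s₁ ≤ d/2`, then `‖T_f g‖^{h;ζ}_{B^s_{2,r}} ≤ C‖f‖_{B^{s₁}_{2,1}}‖g‖^{h;ζ/4}_{B^{s₂}_{2,r}}`,
with `C` independent of `f`, `g`, `ζ`. -/
theorem stmt_8
    {d : ℕ} (hd : 2 ≤ d) (b : Fin d → ℝ) (hb : ∀ i, 0 < b i)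
    (φ : ℝ → ℝ) (hφ : GoodBump φ)
    (s s₁ s₂ : ℝ) (hsum : s + (d:ℝ)/2 = s₁ + s₂) (hs₁ : s₁ ≤ (d:ℝ)/2)
    (r : ℝ≥0∞) (hr : 1 ≤ r) :
    ∃ C : ℝ≥0∞, C < ⊤ ∧
      ∀ ζ : ℝ, 0 < ζ → ∀ f g : SF d,
        besovN φ b s₁ 1 f < ⊤ → besovN φ b s₂ r g < ⊤ →
        besovH φ b ζ s r (paraC φ b f g) ≤
          C * besovN φ b s₁ 1 f * besovH φ b (ζ/4) s₂ r g := by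
  have hd0 : 0 < d := by omega
  refine ⟨5 * ((‖((Real.sqrt (vol b) : ℂ))⁻¹‖₊ : ℝ≥0∞) * (Km b ((d:ℝ)/2 - s₁) + Kcnt b)
      * (2:ℝ≥0∞) ^ (2*|s|)), ?_, ?_⟩
  · rw [lt_top_iff_ne_top]
    refine ENNReal.mul_ne_top (ENNReal.ofNat_ne_top) ?_
    refine ENNReal.mul_ne_top (ENNReal.mul_ne_top ENNReal.coe_ne_top ?_) (two_rpow_lt_top _).ne
    refine ENNReal.add_ne_top.mpr ⟨?_, ENNReal.ofReal_ne_top⟩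
    unfold Km
    exact (two_rpow_lt_top _).ne
  · intro ζ hζ f g hf hg
    have key : ∀ ℓ : ℤ, (if ζ ≤ (2:ℝ)^ℓ then bw φ b s (paraC φ b f g) ℓ else 0) ≤
        ∑ i ∈ Finset.Icc (-2:ℤ) 2,
          ((‖((Real.sqrt (vol b) : ℂ))⁻¹‖₊ : ℝ≥0∞) * (Km b ((d:ℝ)/2 - s₁) + Kcnt b)
              * (2:ℝ≥0∞) ^ (2*|s|) * besovN φ b s₁ 1 f)
            * (if ζ/4 ≤ (2:ℝ)^(ℓ+i) then bw φ b s₂ g (ℓ+i) else 0) :=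
      fun ℓ => block_bound hd0 hb hφ hsum hs₁ (ζ := ζ) f g ℓ
    unfold besovH
    calc lr r (fun j : ℤ => if ζ ≤ (2:ℝ)^j then bw φ b s (paraC φ b f g) j else 0)
        ≤ lr r (fun ℓ : ℤ => ∑ i ∈ Finset.Icc (-2:ℤ) 2,
            ((‖((Real.sqrt (vol b) : ℂ))⁻¹‖₊ : ℝ≥0∞) * (Km b ((d:ℝ)/2 - s₁) + Kcnt b)
                * (2:ℝ≥0∞) ^ (2*|s|) * besovN φ b s₁ 1 f)
              * (if ζ/4 ≤ (2:ℝ)^(ℓ+i) then bw φ b s₂ g (ℓ+i) else 0)) := lr_mono8 key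
      _ ≤ ∑ i ∈ Finset.Icc (-2:ℤ) 2, lr r (fun ℓ : ℤ =>
            ((‖((Real.sqrt (vol b) : ℂ))⁻¹‖₊ : ℝ≥0∞) * (Km b ((d:ℝ)/2 - s₁) + Kcnt b)
                * (2:ℝ≥0∞) ^ (2*|s|) * besovN φ b s₁ 1 f)
              * (if ζ/4 ≤ (2:ℝ)^(ℓ+i) then bw φ b s₂ g (ℓ+i) else 0)) :=
          lr_sum_le8 hr (Finset.Icc (-2:ℤ) 2) (fun i ℓ =>
            ((‖((Real.sqrt (vol b) : ℂ))⁻¹‖₊ : ℝ≥0∞) * (Km b ((d:ℝ)/2 - s₁) + Kcnt b)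
                * (2:ℝ≥0∞) ^ (2*|s|) * besovN φ b s₁ 1 f)
              * (if ζ/4 ≤ (2:ℝ)^(ℓ+i) then bw φ b s₂ g (ℓ+i) else 0))
      _ = ∑ i ∈ Finset.Icc (-2:ℤ) 2,
            ((‖((Real.sqrt (vol b) : ℂ))⁻¹‖₊ : ℝ≥0∞) * (Km b ((d:ℝ)/2 - s₁) + Kcnt b)
                * (2:ℝ≥0∞) ^ (2*|s|) * besovN φ b s₁ 1 f)
              * lr r (fun ℓ : ℤ => if ζ/4 ≤ (2:ℝ)^(ℓ+i) then bw φ b s₂ g (ℓ+i) else 0) :=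
          Finset.sum_congr rfl fun i _ => lr_const_mul8 hr _ _
      _ = ∑ i ∈ Finset.Icc (-2:ℤ) 2,
            ((‖((Real.sqrt (vol b) : ℂ))⁻¹‖₊ : ℝ≥0∞) * (Km b ((d:ℝ)/2 - s₁) + Kcnt b)
                * (2:ℝ≥0∞) ^ (2*|s|) * besovN φ b s₁ 1 f)
              * lr r (fun j : ℤ => if ζ/4 ≤ (2:ℝ)^j then bw φ b s₂ g j else 0) := by
          refine Finset.sum_congr rfl fun i _ => ?_
          congr 1
          exact lr_shift8 (fun j : ℤ => if ζ/4 ≤ (2:ℝ)^j then bw φ b s₂ g j else 0) i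
      _ = 5 * ((‖((Real.sqrt (vol b) : ℂ))⁻¹‖₊ : ℝ≥0∞) * (Km b ((d:ℝ)/2 - s₁) + Kcnt b)
              * (2:ℝ≥0∞) ^ (2*|s|)) * besovN φ b s₁ 1 f
            * lr r (fun j : ℤ => if ζ/4 ≤ (2:ℝ)^j then bw φ b s₂ g j else 0) := by
          rw [Finset.sum_const, show (Finset.Icc (-2:ℤ) 2).card = 5 from by
            rw [Int.card_Icc]; rfl, nsmul_eq_mul]
          push_cast
          ring


end LowMach
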